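/- arXiv:0911.2960 — 6 statements merged into one kernel-verified Lean document; each statement's English description precedes it below -/
import Mathlib

section
/- Fix an integer k ≥ 3, a length ℓ ≥ 0, and an endpoint μ ∈ W_{k−1}. Then ω^μ_{k,ℓ} = Σ_{π ∈ S_{k−1}} sgn(π) · a^{π(μ)}_{k,ℓ}, where the sum is over all permutations π of {1,…,k−1}, sgn(π) is the sign of π, and π(μ) = (μ_{π(1)}, μ_{π(2)}, …, μ_{π(k−1)}). -/
open Finset

/-- Lattice points in `ℤ^(k-1)`; coordinate `i : Fin (k-1)` represents `ν_{i+1}`. -/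
abbrev Pt (k : ℕ) := Fin (k - 1) → ℤ

/-- The starting point `δ = (k-2, k-3, …, 1, 0)`. -/
def delta (k : ℕ) : Pt k := fun i => (k : ℤ) - 2 - (i : ℤ)

/-- Membership in `Q_{k-1}`: all coordinates nonnegative. -/
def inQ {k : ℕ} (v : Pt k) : Prop := ∀ i, 0 ≤ v i

/-- Membership in `W_{k-1}`: `ν_1 > ν_2 > ⋯ > ν_{k-1} ≥ 0`. -/
def inW {k : ℕ} (v : Pt k) : Prop := StrictAnti v ∧ ∀ i, 0 ≤ v i

/-- `eVec k i` is `e_i`: `e_0 = 0` and for `1 ≤ i ≤ k-1`, `e_i` is the `i`-th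
standard basis vector of `ℤ^(k-1)`. -/
def eVec (k : ℕ) (i : Fin k) : Pt k := fun j => if (j : ℕ) + 1 = (i : ℕ) then 1 else 0

/-- The vector `e_1`. -/
def eOne (k : ℕ) : Pt k := fun j => if (j : ℕ) = 0 then 1 else 0

/-- A step in `{+e_i : 0 ≤ i ≤ k-1}`. -/
def plusStep {k : ℕ} (d : Pt k) : Prop := ∃ i : Fin k, d = eVec k i

/-- A step in `{-e_i : 0 ≤ i ≤ k-1}`. -/
def minusStep {k : ℕ} (d : Pt k) : Prop := ∃ i : Fin k, d = -eVec k i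

/-- A `𝒫_D`-walk of length `ℓ`: starts at `δ`, stays in `D`, odd steps are `-e_i`,
even steps are `+e_i`. -/
def IsPWalk {k : ℕ} (D : Pt k → Prop) (ℓ : ℕ) (v : Fin (ℓ + 1) → Pt k) : Prop :=
  v ⟨0, Nat.succ_pos ℓ⟩ = delta k ∧ (∀ t, D (v t)) ∧
    ∀ t : ℕ, ∀ h : t + 1 < ℓ + 1,
      (Odd (t + 1) → minusStep (v ⟨t + 1, h⟩ - v ⟨t, by omega⟩)) ∧
      (Even (t + 1) → plusStep (v ⟨t + 1, h⟩ - v ⟨t, by omega⟩))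

/-- A `ℬ_D`-walk of length `ℓ`: starts at `δ`, stays in `D`, odd steps are `+e_i`,
even steps are `-e_i`. -/
def IsBWalk {k : ℕ} (D : Pt k → Prop) (ℓ : ℕ) (v : Fin (ℓ + 1) → Pt k) : Prop :=
  v ⟨0, Nat.succ_pos ℓ⟩ = delta k ∧ (∀ t, D (v t)) ∧
    ∀ t : ℕ, ∀ h : t + 1 < ℓ + 1,
      (Odd (t + 1) → plusStep (v ⟨t + 1, h⟩ - v ⟨t, by omega⟩)) ∧
      (Even (t + 1) → minusStep (v ⟨t + 1, h⟩ - v ⟨t, by omega⟩))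

/-- A walk is loop-free if no odd/even step pair `(+e_1, -e_1)` occurs. -/
def LoopFree {k ℓ : ℕ} (v : Fin (ℓ + 1) → Pt k) : Prop :=
  ∀ q : ℕ, 1 ≤ q → ∀ h : 2 * q < ℓ + 1,
    ¬ (v ⟨2 * q - 1, by omega⟩ - v ⟨2 * q - 2, by omega⟩ = eOne k ∧
       v ⟨2 * q, h⟩ - v ⟨2 * q - 1, by omega⟩ = -eOne k)

/-- `a^ν_{k,ℓ}`: the number of `𝒫_{Q_{k-1}}`-walks of length `ℓ` ending at `ν`. -/
noncomputable def aCount (k ℓ : ℕ) (ν : Pt k) : ℕ :=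
  Nat.card {v : Fin (ℓ + 1) → Pt k //
    IsPWalk (inQ (k := k)) ℓ v ∧ v (Fin.last ℓ) = ν}

/-- `ω^ν_{k,ℓ}`: the number of `𝒫_{W_{k-1}}`-walks of length `ℓ` ending at `ν`. -/
noncomputable def omegaCount (k ℓ : ℕ) (ν : Pt k) : ℕ :=
  Nat.card {v : Fin (ℓ + 1) → Pt k //
    IsPWalk (inW (k := k)) ℓ v ∧ v (Fin.last ℓ) = ν}

/-- `σ^ν_{k,ℓ}`: the number of `ℬ_{W_{k-1}}`-walks of length `ℓ` ending at `ν`. -/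
noncomputable def sigmaCount (k ℓ : ℕ) (ν : Pt k) : ℕ :=
  Nat.card {v : Fin (ℓ + 1) → Pt k //
    IsBWalk (inW (k := k)) ℓ v ∧ v (Fin.last ℓ) = ν}

/-- `σ^{ν;*}_{k,ℓ}`: the number of loop-free `ℬ_{W_{k-1}}`-walks of length `ℓ`
ending at `ν`. -/
noncomputable def sigmaStarCount (k ℓ : ℕ) (ν : Pt k) : ℕ :=
  Nat.card {v : Fin (ℓ + 1) → Pt k //
    IsBWalk (inW (k := k)) ℓ v ∧ LoopFree v ∧ v (Fin.last ℓ) = ν}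

/-- `(a,b)` is an arc of the standard representation of the partition `P`:
`a < b`, `a` and `b` lie in a common block `B`, and no element of `B` lies
strictly between them. -/
def IsArc {N : ℕ} (P : Finpartition (Finset.univ : Finset (Fin N))) (a b : Fin N) : Prop :=
  a < b ∧ ∃ B ∈ P.parts, a ∈ B ∧ b ∈ B ∧ ∀ c ∈ B, ¬(a < c ∧ c < b)

/-- The partition `P` has a `k`-crossing: arcs `(i₁,j₁),…,(i_k,j_k)` with
`i₁ < ⋯ < i_k < j₁ < ⋯ < j_k`. -/
def PartitionHasKCrossing {N : ℕ} (k : ℕ)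
    (P : Finpartition (Finset.univ : Finset (Fin N))) : Prop :=
  ∃ ii jj : Fin k → Fin N, (∀ m, IsArc P (ii m) (jj m)) ∧
    StrictMono ii ∧ StrictMono jj ∧ ∀ m m', ii m < jj m'

/-- The partition `P` is `2`-regular: distinct elements of a common block differ
by at least `2`. -/
def TwoRegular {N : ℕ} (P : Finpartition (Finset.univ : Finset (Fin N))) : Prop :=
  ∀ B ∈ P.parts, ∀ x ∈ B, ∀ y ∈ B, x ≠ y → 2 ≤ |((x : ℕ) : ℤ) - ((y : ℕ) : ℤ)|

/-- A braid over `[N]`, given by its arc set: arcs `(i,j)` with `i ≤ j` (loops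
allowed), each vertex is the smaller endpoint of at most one arc and the larger
endpoint of at most one arc. -/
def IsBraid {N : ℕ} (A : Finset (Fin N × Fin N)) : Prop :=
  (∀ p ∈ A, p.1 ≤ p.2) ∧ (∀ p ∈ A, ∀ q ∈ A, p.1 = q.1 → p = q) ∧
    (∀ p ∈ A, ∀ q ∈ A, p.2 = q.2 → p = q)

/-- The braid with arc set `A` has a `k`-crossing: arcs `(i₁,j₁),…,(i_k,j_k)`
with `i₁ < ⋯ < i_k ≤ j₁ < ⋯ < j_k`. -/
def BraidHasKCrossing {N : ℕ} (k : ℕ) (A : Finset (Fin N × Fin N)) : Prop :=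
  ∃ ii jj : Fin k → Fin N, (∀ m, (ii m, jj m) ∈ A) ∧
    StrictMono ii ∧ StrictMono jj ∧ ∀ m m', ii m ≤ jj m'

/-- A braid is loop-free if it has no arc `(i,i)`. -/
def BraidLoopFree {N : ℕ} (A : Finset (Fin N × Fin N)) : Prop :=
  ∀ p ∈ A, p.1 ≠ p.2

/-!
Gessel–Zeilberger reflection. Count pairs `(π, v)`, with `v` a `𝒫_{Q_{k-1}}`-walk ending at
`π(μ)`, with sign `sgn π`; this gives the right-hand side. If `v` ever meets a wall `ν_i = ν_j`,
swap the coordinates `i, j` of every point of `v` from the first such meeting on, and replace `π`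
by `π ∘ (i j)`. Since `Q_{k-1}` and the step sets are invariant under permuting coordinates, this
is a sign-reversing involution on such pairs. A walk that never meets a wall stays strictly
decreasing from `δ` on, because a step moves a single coordinate by at most one; so its endpoint
`π(μ)` is strictly decreasing, which forces `π = 1`, and these walks are exactly the
`𝒫_{W_{k-1}}`-walks ending at `μ`.
-/

open Function Equiv

def IsSmallStep {ι : Type*} (d : ι → ℤ) : Prop :=
  (∀ i, |d i| ≤ 1) ∧ ∀ i j, i ≠ j → d i = 0 ∨ d j = 0

lemma IsSmallStep.neg {ι : Type*} {d : ι → ℤ} (hd : IsSmallStep d) : IsSmallStep (-d) :=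
  ⟨fun i => by simpa using hd.1 i, fun i j hij => by simpa using hd.2 i j hij⟩

/-- A small step cannot jump over a wall `x i = x j`. -/
lemma StrictAnti.add_of_isSmallStep {ι : Type*} [Preorder ι] {x d : ι → ℤ} (hx : StrictAnti x)
    (hd : IsSmallStep d) (hinj : Injective (x + d)) : StrictAnti (x + d) := by
  intro i j hij
  have hne : x j + d j ≠ x i + d i := hinj.ne hij.ne'
  have hlt := hx hij
  have hi := abs_le.1 (hd.1 i)
  have hj := abs_le.1 (hd.1 j)
  simp only [Pi.add_apply]
  rcases hd.2 i j hij.ne with h | h <;> omega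

lemma Equiv.Perm.eq_one_of_strictAnti_comp {α β : Type*} [LinearOrder α] [Finite α] [Preorder β]
    {μ : α → β} (hμ : StrictAnti μ) {π : Perm α} (h : StrictAnti (μ ∘ π)) : π = 1 :=
  have hπ : StrictMono π := fun _ _ hij => hμ.lt_iff_gt.1 (h hij)
  Equiv.ext fun _ => hπ.apply_eq

section Steps

variable {k : ℕ}

lemma delta_strictAnti : StrictAnti (delta k) := by
  intro i j hij
  have : (i : ℤ) < j := by exact_mod_cast hij
  simp only [delta]
  omega

lemma isSmallStep_eVec (m : Fin k) : IsSmallStep (eVec k m) := by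
  refine ⟨fun i => ?_, fun i j hij => ?_⟩
  · simp only [eVec]
    split_ifs <;> norm_num
  · by_contra! h
    simp only [eVec, ne_eq, ite_eq_right_iff, one_ne_zero, imp_false, not_not] at h
    exact hij (Fin.ext (by omega))

lemma eVec_succ (i : Fin (k - 1)) (h : (i : ℕ) + 1 < k) : eVec k ⟨i + 1, h⟩ = Pi.single i 1 := by
  funext j
  simp [eVec, Pi.single_apply, Fin.ext_iff]

lemma eVec_comp_perm (σ : Perm (Fin (k - 1))) (m : Fin k) : ∃ m', eVec k m ∘ σ = eVec k m' := by
  rcases m with ⟨_ | i, hm⟩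
  · exact ⟨⟨0, hm⟩, funext fun j => by simp [eVec]⟩
  · have hi : i < k - 1 := by omega
    refine ⟨⟨σ.symm ⟨i, hi⟩ + 1, by omega⟩, ?_⟩
    rw [eVec_succ ⟨i, hi⟩, eVec_succ, Pi.single_comp_equiv]

lemma plusStep.isSmallStep {d : Pt k} (h : plusStep d) : IsSmallStep d := by
  obtain ⟨m, rfl⟩ := h
  exact isSmallStep_eVec m

lemma minusStep.isSmallStep {d : Pt k} (h : minusStep d) : IsSmallStep d := by
  obtain ⟨m, rfl⟩ := h
  exact (isSmallStep_eVec m).neg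

lemma plusStep.comp_perm {d : Pt k} (h : plusStep d) (σ : Perm (Fin (k - 1))) :
    plusStep (d ∘ σ) := by
  obtain ⟨m, rfl⟩ := h
  exact eVec_comp_perm σ m

lemma minusStep.comp_perm {d : Pt k} (h : minusStep d) (σ : Perm (Fin (k - 1))) :
    minusStep (d ∘ σ) := by
  obtain ⟨m, rfl⟩ := h
  obtain ⟨m', hm'⟩ := eVec_comp_perm σ m
  exact ⟨m', by rw [← hm']; rfl⟩

end Steps

section Reflection

variable {T ι α : Type*}

section CollisionSwap

variable [DecidableEq ι]

open Classical in
noncomputable def collisionSwap (w : ι → α) : Perm ι :=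
  if h : ∃ p : ι × ι, p.1 ≠ p.2 ∧ w p.1 = w p.2 then swap h.choose.1 h.choose.2 else 1

lemma comp_collisionSwap (w : ι → α) : w ∘ collisionSwap w = w := by
  unfold collisionSwap
  split_ifs with h
  · obtain ⟨-, he⟩ := h.choose_spec
    funext x
    rcases eq_or_ne x h.choose.1 with rfl | h1
    · simpa using he.symm
    rcases eq_or_ne x h.choose.2 with rfl | h2
    · simpa using he
    · simp [swap_apply_of_ne_of_ne h1 h2]
  · rfl

lemma collisionSwap_of_injective {w : ι → α} (hw : Injective w) : collisionSwap w = 1 :=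
  dif_neg fun ⟨_, hne, he⟩ => hne (hw he)

lemma collisionSwap_mul_self (w : ι → α) : collisionSwap w * collisionSwap w = 1 := by
  unfold collisionSwap
  split_ifs
  · exact swap_mul_self _ _
  · exact one_mul 1

lemma sign_collisionSwap [Fintype ι] {w : ι → α} (hw : ¬Injective w) :
    Perm.sign (collisionSwap w) = -1 := by
  obtain ⟨a, b, he, hne⟩ := not_injective_iff.1 hw
  have h : ∃ p : ι × ι, p.1 ≠ p.2 ∧ w p.1 = w p.2 := ⟨(a, b), hne, he⟩
  rw [collisionSwap, dif_pos h]
  exact Perm.sign_swap h.choose_spec.1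

end CollisionSwap

variable [LinearOrder T]

def reflectFrom (v : T → ι → α) (t₀ : T) (σ : Perm ι) (t : T) : ι → α :=
  if t < t₀ then v t else v t ∘ σ

variable {v : T → ι → α} {t₀ t : T} {σ : Perm ι}

lemma reflectFrom_of_le (ht : t₀ ≤ t) : reflectFrom v t₀ σ t = v t ∘ σ :=
  if_neg ht.not_gt

lemma reflectFrom_of_le_of_comp_eq (hσ : v t₀ ∘ σ = v t₀) (ht : t ≤ t₀) :
    reflectFrom v t₀ σ t = v t := by
  rcases ht.lt_or_eq with ht | rfl
  · exact if_pos ht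
  · rw [reflectFrom_of_le le_rfl, hσ]

lemma reflectFrom_one : reflectFrom v t₀ 1 = v := by
  funext t
  unfold reflectFrom
  split_ifs <;> rfl

lemma reflectFrom_reflectFrom (hσ : σ * σ = 1) : reflectFrom (reflectFrom v t₀ σ) t₀ σ = v := by
  funext t
  unfold reflectFrom
  split_ifs
  · rfl
  · rw [comp_assoc, ← Perm.coe_mul, hσ, Perm.coe_one, comp_id]

variable [WellFoundedLT T] [Inhabited T]

open Classical in
/-- `default` if `v` never hits a wall, which is harmless: `collisionSwap` of an injective
point is `1`. -/
noncomputable def firstCollision (v : T → ι → α) : T :=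
  if h : ∃ t, ¬Injective (v t) then wellFounded_lt.min {t | ¬Injective (v t)} h else default

lemma not_injective_firstCollision (h : ∃ t, ¬Injective (v t)) :
    ¬Injective (v (firstCollision v)) := by
  rw [firstCollision, dif_pos h]
  exact wellFounded_lt.min_mem {t | ¬Injective (v t)} h

lemma injective_of_lt_firstCollision (ht : t < firstCollision v) : Injective (v t) := by
  by_cases h : ∃ t, ¬Injective (v t)
  · rw [firstCollision, dif_pos h] at ht
    by_contra hv
    exact wellFounded_lt.not_lt_min {t | ¬Injective (v t)} hv ht
  · push Not at h
    exact h t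

lemma firstCollision_eq (h₀ : ¬Injective (v t₀)) (hlt : ∀ t < t₀, Injective (v t)) :
    firstCollision v = t₀ := by
  refine le_antisymm ?_ ?_
  · rw [firstCollision, dif_pos ⟨t₀, h₀⟩]
    exact not_lt.1 (wellFounded_lt.not_lt_min {t | ¬Injective (v t)} h₀)
  · by_contra! h
    exact not_injective_firstCollision ⟨t₀, h₀⟩ (hlt _ h)

variable [DecidableEq ι]

noncomputable def firstCollisionSwap (v : T → ι → α) : Perm ι :=
  collisionSwap (v (firstCollision v))

noncomputable def reflectAtCollision (v : T → ι → α) : T → ι → α :=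
  reflectFrom v (firstCollision v) (firstCollisionSwap v)

lemma reflectAtCollision_of_le_firstCollision (ht : t ≤ firstCollision v) :
    reflectAtCollision v t = v t :=
  reflectFrom_of_le_of_comp_eq (comp_collisionSwap _) ht

lemma reflectAtCollision_of_firstCollision_le (ht : firstCollision v ≤ t) :
    reflectAtCollision v t = v t ∘ firstCollisionSwap v :=
  reflectFrom_of_le ht

lemma reflectAtCollision_of_forall_injective (h : ∀ t, Injective (v t)) :
    reflectAtCollision v = v := by
  rw [reflectAtCollision, firstCollisionSwap, collisionSwap_of_injective (h _), reflectFrom_one]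

lemma exists_not_injective_reflectAtCollision (h : ∃ t, ¬Injective (v t)) :
    ∃ t, ¬Injective (reflectAtCollision v t) :=
  ⟨firstCollision v, by
    rw [reflectAtCollision_of_le_firstCollision le_rfl]
    exact not_injective_firstCollision h⟩

lemma firstCollision_reflectAtCollision :
    firstCollision (reflectAtCollision v) = firstCollision v := by
  by_cases h : ∃ t, ¬Injective (v t)
  · refine firstCollision_eq ?_ fun t ht => ?_
    · rw [reflectAtCollision_of_le_firstCollision le_rfl]
      exact not_injective_firstCollision h
    · rw [reflectAtCollision_of_le_firstCollision ht.le]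
      exact injective_of_lt_firstCollision ht
  · push Not at h
    rw [reflectAtCollision_of_forall_injective h]

lemma firstCollisionSwap_reflectAtCollision :
    firstCollisionSwap (reflectAtCollision v) = firstCollisionSwap v := by
  rw [firstCollisionSwap, firstCollision_reflectAtCollision,
    reflectAtCollision_of_le_firstCollision le_rfl, firstCollisionSwap]

lemma reflectAtCollision_reflectAtCollision :
    reflectAtCollision (reflectAtCollision v) = v := by
  rw [reflectAtCollision, firstCollision_reflectAtCollision, firstCollisionSwap_reflectAtCollision]
  exact reflectFrom_reflectFrom (collisionSwap_mul_self _)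

lemma sign_firstCollisionSwap [Fintype ι] (h : ∃ t, ¬Injective (v t)) :
    Perm.sign (firstCollisionSwap v) = -1 :=
  sign_collisionSwap (not_injective_firstCollision h)

end Reflection

namespace IsPWalk

variable {k ℓ : ℕ} {D D' : Pt k → Prop} {v : Fin (ℓ + 1) → Pt k}

lemma mono (hv : IsPWalk D ℓ v) (hD : ∀ x, D x → D' x) : IsPWalk D' ℓ v :=
  ⟨hv.1, fun t => hD _ (hv.2.1 t), hv.2.2⟩

lemma isSmallStep_succ (hv : IsPWalk D ℓ v) (t : Fin ℓ) :
    IsSmallStep (v t.succ - v t.castSucc) := by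
  rcases Nat.even_or_odd (t + 1) with h | h
  · exact ((hv.2.2 t (by omega)).2 h).isSmallStep
  · exact ((hv.2.2 t (by omega)).1 h).isSmallStep

lemma apply_le (hv : IsPWalk D ℓ v) (t : Fin (ℓ + 1)) (i : Fin (k - 1)) : v t i ≤ k + t := by
  induction t using Fin.induction with
  | zero =>
    change v ⟨0, _⟩ i ≤ _
    simp only [hv.1, delta]
    omega
  | succ t ih =>
    have := abs_le.1 ((hv.isSmallStep_succ t).1 i)
    simp only [Pi.sub_apply, Fin.val_castSucc, Fin.val_succ] at this ih ⊢
    push_cast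
    omega

lemma strictAnti_of_injective (hv : IsPWalk D ℓ v) (hinj : ∀ t, Injective (v t))
    (t : Fin (ℓ + 1)) : StrictAnti (v t) := by
  induction t using Fin.induction with
  | zero => exact hv.1 ▸ delta_strictAnti
  | succ t ih =>
    have h := ih.add_of_isSmallStep (hv.isSmallStep_succ t) (by simpa using hinj t.succ)
    rwa [add_sub_cancel] at h

lemma reflectFrom {t₀ : Fin (ℓ + 1)} {σ : Perm (Fin (k - 1))} (hv : IsPWalk D ℓ v)
    (hD : ∀ x, D x → D (x ∘ σ)) (hσ : v t₀ ∘ σ = v t₀) : IsPWalk D ℓ (reflectFrom v t₀ σ) := by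
  refine ⟨?_, fun t => ?_, fun t h => ?_⟩
  · rw [reflectFrom_of_le_of_comp_eq (t := ⟨0, Nat.succ_pos ℓ⟩) hσ (Nat.zero_le _)]
    exact hv.1
  · unfold _root_.reflectFrom
    split_ifs
    exacts [hv.2.1 t, hD _ (hv.2.1 t)]
  · rcases le_or_gt (t + 1) t₀ with ht | ht
    · rw [reflectFrom_of_le_of_comp_eq hσ (Fin.le_def.2 ht),
        reflectFrom_of_le_of_comp_eq hσ (Fin.le_def.2 (by simp only; omega))]
      exact hv.2.2 t h
    · rw [reflectFrom_of_le (Fin.le_def.2 (by simp only; omega)),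
        reflectFrom_of_le (Fin.le_def.2 (by simp only; omega))]
      exact ⟨fun ho => ((hv.2.2 t h).1 ho).comp_perm σ, fun he => ((hv.2.2 t h).2 he).comp_perm σ⟩

lemma reflectAtCollision (hv : IsPWalk D ℓ v)
    (hD : ∀ x (σ : Perm (Fin (k - 1))), D x → D (x ∘ σ)) :
    IsPWalk D ℓ (reflectAtCollision v) :=
  hv.reflectFrom (hD · _) (comp_collisionSwap _)

end IsPWalk

lemma sum_mul_natCard_eq_sum_subtype {ι β R : Type*} [Fintype ι] [CommSemiring R]
    (p : ι → β → Prop) [Fintype {x : ι × β // p x.1 x.2}] (f : ι → R) :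
    ∑ i, f i * Nat.card {b // p i b} = ∑ x : {x : ι × β // p x.1 x.2}, f x.1.1 := by
  have (i : ι) : Fintype {b // p i b} :=
    Fintype.ofInjective (fun b => (⟨(i, b.1), b.2⟩ : {x : ι × β // p x.1 x.2}))
      fun _ _ h => Subtype.ext (congrArg (fun x => x.1.2) h)
  rw [Fintype.sum_equiv (subtypeProdEquivSigmaSubtype p) (fun x => f x.1.1) (fun y => f y.1)
      fun _ => rfl,
    Fintype.sum_sigma]
  simp [Nat.card_eq_fintype_card, mul_comm]

lemma finite_setOf_isPWalk_inQ (k ℓ : ℕ) : {v : Fin (ℓ + 1) → Pt k | IsPWalk inQ ℓ v}.Finite := by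
  refine (Set.Finite.pi fun _ => Set.Finite.pi fun _ => Set.finite_Icc (0 : ℤ) (k + ℓ)).subset
    fun v hv => ?_
  simp only [Set.mem_pi, Set.mem_univ, Set.mem_Icc, forall_const]
  exact fun t i => ⟨hv.2.1 t i, (hv.apply_le t i).trans (by have := t.is_le; omega)⟩

section SignedWalks

variable (k ℓ : ℕ) (μ : Pt k)

abbrev SignedQWalk : Type :=
  {x : Perm (Fin (k - 1)) × (Fin (ℓ + 1) → Pt k) // IsPWalk inQ ℓ x.2 ∧ x.2 (Fin.last ℓ) = μ ∘ x.1}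

instance : Finite (SignedQWalk k ℓ μ) :=
  ((Set.finite_univ.prod (finite_setOf_isPWalk_inQ k ℓ)).subset fun _ hx =>
    ⟨trivial, hx.1⟩).to_subtype

noncomputable instance : Fintype (SignedQWalk k ℓ μ) := Fintype.ofFinite _

variable {k ℓ μ}

namespace SignedQWalk

lemma perm_eq_one_of_forall_injective (hμ : StrictAnti μ) (x : SignedQWalk k ℓ μ)
    (hx : ∀ t, Injective (x.1.2 t)) : x.1.1 = 1 :=
  Perm.eq_one_of_strictAnti_comp hμ (x.2.2 ▸ x.2.1.strictAnti_of_injective hx (Fin.last ℓ))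

noncomputable def reflect (x : SignedQWalk k ℓ μ) : SignedQWalk k ℓ μ :=
  ⟨(x.1.1 * firstCollisionSwap x.1.2, reflectAtCollision x.1.2),
    x.2.1.reflectAtCollision fun _ _ hy i => hy _,
    by
      change reflectAtCollision x.1.2 (Fin.last ℓ) = μ ∘ ⇑(x.1.1 * firstCollisionSwap x.1.2)
      rw [reflectAtCollision_of_firstCollision_le (Fin.le_last _), x.2.2]
      rfl⟩

lemma reflect_reflect (x : SignedQWalk k ℓ μ) : x.reflect.reflect = x := by
  refine Subtype.ext (Prod.ext ?_ reflectAtCollision_reflectAtCollision)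
  change x.1.1 * firstCollisionSwap x.1.2 * firstCollisionSwap (reflectAtCollision x.1.2) = x.1.1
  rw [firstCollisionSwap_reflectAtCollision, mul_assoc, firstCollisionSwap, collisionSwap_mul_self,
    mul_one]

lemma sign_reflect {x : SignedQWalk k ℓ μ} (hx : ∃ t, ¬Injective (x.1.2 t)) :
    (Perm.sign x.reflect.1.1 : ℤ) = -Perm.sign x.1.1 := by
  change (Perm.sign (x.1.1 * firstCollisionSwap x.1.2) : ℤ) = _
  rw [Perm.sign_mul, sign_firstCollisionSwap hx]
  push_cast
  ring

end SignedQWalk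

open Classical in
lemma card_filter_forall_injective (hμ : StrictAnti μ) :
    #{x : SignedQWalk k ℓ μ | ∀ t, Injective (x.1.2 t)} = omegaCount k ℓ μ := by
  rw [← Fintype.card_subtype, ← Nat.card_eq_fintype_card]
  refine Nat.card_congr
    { toFun := fun x => ⟨x.1.1.2, ?_, ?_⟩
      invFun := fun w => ⟨⟨(1, w.1), w.2.1.mono fun _ hx => hx.2, w.2.2⟩,
        fun t => (w.2.1.2.1 t).1.injective⟩
      left_inv := fun x => Subtype.ext <| Subtype.ext <|
        Prod.ext (SignedQWalk.perm_eq_one_of_forall_injective hμ x.1 x.2).symm rfl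
      right_inv := fun _ => rfl }
  · exact ⟨x.1.2.1.1, fun t => ⟨x.1.2.1.strictAnti_of_injective x.2 t, x.1.2.1.2.1 t⟩,
      x.1.2.1.2.2⟩
  · rw [x.1.2.2, SignedQWalk.perm_eq_one_of_forall_injective hμ x.1 x.2]
    rfl

open Classical in
lemma sum_sign_filter_forall_injective (hμ : StrictAnti μ) :
    ∑ x : SignedQWalk k ℓ μ with ∀ t, Injective (x.1.2 t), (Perm.sign x.1.1 : ℤ) =
      omegaCount k ℓ μ := by
  rw [Finset.sum_congr rfl fun x hx => by
      rw [SignedQWalk.perm_eq_one_of_forall_injective hμ x (mem_filter.1 hx).2, Perm.sign_one],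
    sum_const, card_filter_forall_injective hμ]
  simp

open Classical in
lemma sum_sign_filter_not_forall_injective :
    ∑ x : SignedQWalk k ℓ μ with ¬∀ t, Injective (x.1.2 t), (Perm.sign x.1.1 : ℤ) = 0 := by
  simp only [not_forall]
  refine sum_involution (fun x _ => x.reflect) (fun x hx => ?_) (fun x hx hne heq => ?_)
    (fun x hx => ?_) (fun x _ => x.reflect_reflect)
  · rw [SignedQWalk.sign_reflect (mem_filter.1 hx).2, add_neg_cancel]
  · have := SignedQWalk.sign_reflect (mem_filter.1 hx).2
    rw [heq] at this
    omega
  · exact mem_filter.2 ⟨mem_univ _, exists_not_injective_reflectAtCollision (mem_filter.1 hx).2⟩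

end SignedWalks

theorem omega_eq_signed_sum_general (k ℓ : ℕ) (μ : Pt k) (hμ : inW μ) :
    (omegaCount k ℓ μ : ℤ) =
      ∑ π : Equiv.Perm (Fin (k - 1)),
        (Equiv.Perm.sign π : ℤ) * (aCount k ℓ (μ ∘ π) : ℤ) := by
  unfold aCount
  rw [sum_mul_natCard_eq_sum_subtype fun (π : Perm (Fin (k - 1))) v =>
      IsPWalk inQ ℓ v ∧ v (Fin.last ℓ) = μ ∘ π,
    ← sum_filter_add_sum_filter_not univ fun x : SignedQWalk k ℓ μ => ∀ t, Injective (x.1.2 t),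
    sum_sign_filter_forall_injective hμ.1, sum_sign_filter_not_forall_injective, add_zero]

/-- the reflection-principle formula
`ω^μ_{k,ℓ} = Σ_{π ∈ S_{k-1}} sgn(π) a^{π(μ)}_{k,ℓ}`. -/
theorem omega_eq_signed_sum (k ℓ : ℕ) (hk : 3 ≤ k) (μ : Pt k) (hμ : inW μ) :
    (omegaCount k ℓ μ : ℤ) =
      ∑ π : Equiv.Perm (Fin (k - 1)),
        (Equiv.Perm.sign π : ℤ) * (aCount k ℓ (μ ∘ π) : ℤ) :=
  omega_eq_signed_sum_general k ℓ μ hμ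
end

section
/- Fix an integer k ≥ 3, an integer ℓ ≥ 0, and ν ∈ W_{k−1}. Then ω^ν_{k,2ℓ+1} = σ^ν_{k,2ℓ}; that is, the number of P_{W_{k−1}}-walks of length 2ℓ+1 ending at ν equals the number of B_{W_{k−1}}-walks of length 2ℓ ending at ν. -/
open Finset

/-!
Every `-e_i` with `i ≥ 1` takes `δ` out of `W_{k-1}`, so the first step of a
`P_{W_{k-1}}`-walk is the null step `-e_0` and the walk sits at `δ` at time `1`.
Dropping its first point shifts the parities of the steps and turns it into a
`B_{W_{k-1}}`-walk one step shorter with the same endpoint; prepending `δ` inverts this.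
-/

theorem inW_delta (k : ℕ) : inW (delta k) :=
  ⟨fun a b hab => by simp only [delta]; omega,
   fun i => by simp only [delta]; omega⟩

theorem eVec_mk_zero {k : ℕ} (hk : 0 < k) : eVec k ⟨0, hk⟩ = 0 := by
  funext j
  simp [eVec]

theorem eVec_eq_zero_of_inW_delta_sub {k : ℕ} {i : Fin k} (h : inW (delta k - eVec k i)) :
    eVec k i = 0 := by
  obtain ⟨_ | m, hik⟩ := i
  · exact eVec_mk_zero hik
  · exfalso
    have hm : m < k - 1 := by omega
    have hval : (delta k - eVec k ⟨m + 1, hik⟩) ⟨m, hm⟩ = (k : ℤ) - 3 - m := by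
      simp only [Pi.sub_apply, delta, eVec, if_pos]
      ring
    rcases Nat.lt_or_ge (m + 1) (k - 1) with hlt | hge
    · have hanti := h.1 (show (⟨m, hm⟩ : Fin (k - 1)) < ⟨m + 1, hlt⟩ from Nat.lt_succ_self m)
      simp only [hval, Pi.sub_apply, delta, eVec, add_left_inj, Nat.succ_ne_self, if_false] at hanti
      push_cast at hanti
      linarith
    · have hnonneg := h.2 ⟨m, hm⟩
      rw [hval] at hnonneg
      omega

section Walks

variable {k : ℕ} {D : Pt k → Prop}

theorem IsPWalk.isBWalk_tail {n : ℕ} {v : Fin (n + 2) → Pt k} (hv : IsPWalk D (n + 1) v)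
    (hmin : ∀ i, D (delta k - eVec k i) → eVec k i = 0) :
    IsBWalk D n (Fin.tail v) := by
  obtain ⟨h0, hD, hstep⟩ := hv
  refine ⟨?_, fun t => hD t.succ, fun t ht => ⟨fun hodd => ?_, fun heven => ?_⟩⟩
  · obtain ⟨i, hi⟩ := (hstep 0 (by omega)).1 odd_one
    change v 1 - v 0 = -eVec k i at hi
    rw [Fin.mk_zero] at h0
    rw [h0, sub_eq_iff_eq_add', ← sub_eq_add_neg] at hi
    show v 1 = delta k
    rw [hi, hmin i (hi ▸ hD 1), sub_zero]
  · exact (hstep (t + 1) (by omega)).2 hodd.add_one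
  · exact (hstep (t + 1) (by omega)).1 heven.add_one

theorem IsBWalk.isPWalk_cons (hk : 0 < k) {n : ℕ} {w : Fin (n + 1) → Pt k}
    (hw : IsBWalk D n w) (hδ : D (delta k)) :
    IsPWalk D (n + 1) (Fin.cons (delta k) w : Fin (n + 2) → Pt k) := by
  obtain ⟨h0, hD, hstep⟩ := hw
  refine ⟨rfl, Fin.forall_fin_succ.mpr ⟨hδ, hD⟩, fun t ht => ?_⟩
  cases t with
  | zero =>
    refine ⟨fun _ => ⟨⟨0, hk⟩, ?_⟩, fun h => absurd h (by decide)⟩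
    show w ⟨0, _⟩ - delta k = _
    rw [h0, sub_self, eVec_mk_zero, neg_zero]
  | succ s =>
    exact ⟨fun hodd => (hstep s (by omega)).2 (Nat.not_odd_iff_even.mp (Nat.odd_add_one.mp hodd)),
      fun heven => (hstep s (by omega)).1 (Nat.not_even_iff_odd.mp (Nat.even_add_one.mp heven))⟩

end Walks

theorem omegaCount_succ_eq_sigmaCount {k : ℕ} (hk : 0 < k) (n : ℕ) (ν : Pt k) :
    omegaCount k (n + 1) ν = sigmaCount k n ν :=
  Nat.card_congr
    { toFun := fun v => ⟨Fin.tail v.1, v.2.1.isBWalk_tail fun _ => eVec_eq_zero_of_inW_delta_sub,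
        v.2.2⟩
      invFun := fun w => ⟨Fin.cons (delta k) w.1, w.2.1.isPWalk_cons hk (inW_delta k), w.2.2⟩
      left_inv := fun v => Subtype.ext <|
        (congrArg (Fin.cons · _) v.2.1.1.symm).trans (Fin.cons_self_tail v.1)
      right_inv := fun w => Subtype.ext <| Fin.tail_cons (α := fun _ => Pt k) (delta k) w.1 }

theorem omega_odd_eq_sigma_even_general (k ℓ : ℕ) (hk : 3 ≤ k) (ν : Pt k) :
    omegaCount k (2 * ℓ + 1) ν = sigmaCount k (2 * ℓ) ν :=
  omegaCount_succ_eq_sigmaCount (by omega) (2 * ℓ) ν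

/-- `ω^ν_{k,2ℓ+1} = σ^ν_{k,2ℓ}`. -/
theorem omega_odd_eq_sigma_even (k ℓ : ℕ) (hk : 3 ≤ k) (ν : Pt k) (hν : inW ν) :
    omegaCount k (2 * ℓ + 1) ν = sigmaCount k (2 * ℓ) ν :=
  omega_odd_eq_sigma_even_general k ℓ hk ν
end

section
/- Fix an integer k ≥ 3 and N ≥ 1. The number of k-noncrossing partitions of [N] equals the number of k-noncrossing braids over [N−1]. -/
open Finset

/-! The arcs of a partition form a *matching*: strict arcs `(a, b)`, `a < b`, with every vertex
the left end of at most one arc and the right end of at most one arc. Conversely a matching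
generates a partition (its connected components) whose arcs are exactly the matching, so
partitions of `[N]` and matchings on `[N]` correspond, `k`-crossings included. Shortening every
arc `(i, j)` of a matching on `[n+1]` to `(i, j-1)` turns it into a braid over `[n]`, and the strict
inequality `i_k < j_1` of a crossing becomes the weak `i_k ≤ j_1 - 1` of a braid crossing. -/

namespace Finpartition

variable {α : Type*} [DecidableEq α]

theorem ext_part {s : Finset α} {P Q : Finpartition s} (h : ∀ a, P.part a = Q.part a) :
    P = Q := by
  have mem_parts_iff (R : Finpartition s) (t : Finset α) :
      t ∈ R.parts ↔ ∃ a ∈ s, R.part a = t :=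
    ⟨fun ht => R.part_surjOn ht, by rintro ⟨a, ha, rfl⟩; exact R.part_mem.2 ha⟩
  ext t
  simp only [mem_parts_iff, h]

variable [Fintype α]

theorem part_eq_part_iff_mem {P : Finpartition (univ : Finset α)} {a b : α} :
    P.part a = P.part b ↔ a ∈ P.part b :=
  (P.mem_part_iff_part_eq_part (mem_univ a) (mem_univ b)).symm

theorem ext_of_part_eq_part_iff {P Q : Finpartition (univ : Finset α)}
    (h : ∀ a b, P.part a = P.part b ↔ Q.part a = Q.part b) : P = Q :=
  ext_part fun b => Finset.ext fun a => by rw [← part_eq_part_iff_mem, h, part_eq_part_iff_mem]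

end Finpartition

open Relation

section Matching

variable {α : Type*}

def arcRel (M : Finset (α × α)) (a b : α) : Prop := (a, b) ∈ M

noncomputable def partitionOf [Fintype α] [DecidableEq α] (M : Finset (α × α)) :
    Finpartition (univ : Finset α) :=
  letI := Classical.decRel (EqvGen.setoid (arcRel M))
  Finpartition.ofSetoid (EqvGen.setoid (arcRel M))

theorem part_partitionOf_eq_iff [Fintype α] [DecidableEq α] {M : Finset (α × α)} {a b : α} :
    (partitionOf M).part a = (partitionOf M).part b ↔ EqvGen (arcRel M) a b := by
  let := Classical.decRel (EqvGen.setoid (arcRel M))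
  rw [eq_comm, Finpartition.part_eq_part_iff_mem]
  exact Finpartition.mem_part_ofSetoid_iff_rel

variable [LinearOrder α]

structure IsMatching (M : Finset (α × α)) : Prop where
  lt : ∀ p ∈ M, p.1 < p.2
  fst_injOn : Set.InjOn Prod.fst (M : Set (α × α))
  snd_injOn : Set.InjOn Prod.snd (M : Set (α × α))

def HasKCrossing (k : ℕ) (M : Finset (α × α)) : Prop :=
  ∃ ii jj : Fin k → α, (∀ m, (ii m, jj m) ∈ M) ∧
    StrictMono ii ∧ StrictMono jj ∧ ∀ m m', ii m < jj m'

namespace IsMatching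

variable {M : Finset (α × α)} (hM : IsMatching M)
include hM

theorem rightUnique : Relator.RightUnique (arcRel M) :=
  fun _ _ _ hb hc => congrArg Prod.snd (hM.fst_injOn hb hc rfl)

theorem leftUnique : Relator.RightUnique (Function.swap (arcRel M)) :=
  fun _ _ _ hb hc => congrArg Prod.fst (hM.snd_injOn hb hc rfl)

theorem le_of_reflTransGen {a b : α} (h : ReflTransGen (arcRel M) a b) : a ≤ b := by
  induction h with
  | refl => exact le_rfl
  | tail _ hstep ih => exact ih.trans (hM.lt _ hstep).le

theorem reflTransGen_total_of_same_end {a b c : α} (hac : ReflTransGen (arcRel M) a c)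
    (hbc : ReflTransGen (arcRel M) b c) :
    ReflTransGen (arcRel M) a b ∨ ReflTransGen (arcRel M) b a :=
  (ReflTransGen.total_of_right_unique hM.leftUnique (reflTransGen_swap.2 hbc)
    (reflTransGen_swap.2 hac)).imp reflTransGen_swap.1 reflTransGen_swap.1

/-- Since every vertex has at most one arc leaving it and one arriving, a connected component
of a matching is a single path. -/
theorem eqvGen_iff {a b : α} :
    EqvGen (arcRel M) a b ↔ ReflTransGen (arcRel M) a b ∨ ReflTransGen (arcRel M) b a := by
  refine ⟨fun h => ?_, ?_⟩
  · induction h with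
    | rel x y h => exact .inl (.single h)
    | refl x => exact .inl .refl
    | symm x y _ ih => exact ih.symm
    | trans x y z _ _ ih₁ ih₂ =>
      rcases ih₁ with h₁ | h₁ <;> rcases ih₂ with h₂ | h₂
      · exact .inl (h₁.trans h₂)
      · exact hM.reflTransGen_total_of_same_end h₁ h₂
      · exact ReflTransGen.total_of_right_unique hM.rightUnique h₁ h₂
      · exact .inr (h₂.trans h₁)
  · rintro (h | h)
    · exact EqvGen.reflTransGen_le_eqvGen _ _ _ h
    · exact (EqvGen.reflTransGen_le_eqvGen _ _ _ h).symm

theorem reflTransGen_of_eqvGen {a b : α} (h : EqvGen (arcRel M) a b) (hab : a < b) :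
    ReflTransGen (arcRel M) a b :=
  (hM.eqvGen_iff.1 h).resolve_right fun hba => (hM.le_of_reflTransGen hba).not_gt hab

theorem mem_iff {a b : α} :
    (a, b) ∈ M ↔ a < b ∧ EqvGen (arcRel M) a b ∧
      ∀ c, EqvGen (arcRel M) a c → ¬(a < c ∧ c < b) := by
  constructor
  · intro h
    refine ⟨hM.lt _ h, .rel _ _ h, ?_⟩
    rintro c hc ⟨hac, hcb⟩
    obtain rfl | ⟨d, had, hdc⟩ := (hM.reflTransGen_of_eqvGen hc hac).cases_head
    · exact hac.false
    · obtain rfl := hM.rightUnique had h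
      exact (hM.le_of_reflTransGen hdc).not_gt hcb
  · rintro ⟨hab, hconn, hgap⟩
    obtain rfl | ⟨d, had, hdb⟩ := (hM.reflTransGen_of_eqvGen hconn hab).cases_head
    · exact (lt_irrefl a hab).elim
    · obtain rfl : d = b := (hM.le_of_reflTransGen hdb).eq_of_not_lt
        fun hdb' => hgap d (.rel _ _ had) ⟨hM.lt _ had, hdb'⟩
      exact had

end IsMatching

end Matching

section Partition

variable {N : ℕ} {P : Finpartition (univ : Finset (Fin N))} {a b : Fin N}

theorem isArc_iff :
    IsArc P a b ↔ a < b ∧ P.part a = P.part b ∧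
      ∀ c, P.part a = P.part c → ¬(a < c ∧ c < b) := by
  constructor
  · rintro ⟨hab, B, hB, haB, hbB, hgap⟩
    have part_eq {x : Fin N} (hx : x ∈ B) : P.part x = B := P.part_eq_of_mem hB hx
    refine ⟨hab, (part_eq haB).trans (part_eq hbB).symm, fun c hc => hgap c ?_⟩
    rw [← part_eq haB, hc]
    exact P.mem_part (mem_univ c)
  · rintro ⟨hab, hpart, hgap⟩
    refine ⟨hab, P.part a, P.part_mem.2 (mem_univ a), P.mem_part (mem_univ a),
      hpart ▸ P.mem_part (mem_univ b), fun c hc => hgap c ?_⟩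
    exact (Finpartition.part_eq_part_iff_mem.2 hc).symm

theorem IsArc.part_eq (h : IsArc P a b) : P.part a = P.part b := (isArc_iff.1 h).2.1

theorem IsArc.snd_unique {b' : Fin N} (h : IsArc P a b) (h' : IsArc P a b') : b = b' := by
  obtain ⟨hab, hpart, hgap⟩ := isArc_iff.1 h
  obtain ⟨hab', hpart', hgap'⟩ := isArc_iff.1 h'
  by_contra hne
  rcases lt_or_gt_of_ne hne with hlt | hlt
  · exact hgap' b hpart ⟨hab, hlt⟩
  · exact hgap b' hpart' ⟨hab', hlt⟩

theorem IsArc.fst_unique {a' : Fin N} (h : IsArc P a b) (h' : IsArc P a' b) : a = a' := by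
  obtain ⟨hab, hpart, hgap⟩ := isArc_iff.1 h
  obtain ⟨hab', hpart', hgap'⟩ := isArc_iff.1 h'
  by_contra hne
  rcases lt_or_gt_of_ne hne with hlt | hlt
  · exact hgap a' (hpart.trans hpart'.symm) ⟨hlt, hab'⟩
  · exact hgap' a (hpart'.trans hpart.symm) ⟨hlt, hab⟩

theorem eqvGen_isArc_of_lt {a b : Fin N} (hab : a < b) (h : P.part a = P.part b) :
    EqvGen (IsArc P) a b := by
  by_cases hgap : ∃ c, P.part a = P.part c ∧ a < c ∧ c < b
  · obtain ⟨c, hac, hac_lt, hcb_lt⟩ := hgap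
    exact (eqvGen_isArc_of_lt hac_lt hac).trans _ _ _ (eqvGen_isArc_of_lt hcb_lt (hac ▸ h))
  · push Not at hgap
    exact .rel _ _ (isArc_iff.2 ⟨hab, h, fun c hc hlt => (hgap c hc hlt.1).not_gt hlt.2⟩)
termination_by (b : ℕ) - a
decreasing_by all_goals (simp only [Fin.lt_def] at *; omega)

theorem eqvGen_isArc_iff : EqvGen (IsArc P) a b ↔ P.part a = P.part b := by
  constructor
  · intro h
    induction h with
    | rel x y h => exact h.part_eq
    | refl x => rfl
    | symm x y _ ih => exact ih.symm
    | trans x y z _ _ ih₁ ih₂ => exact ih₁.trans ih₂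
  · intro h
    rcases lt_trichotomy a b with hab | rfl | hba
    · exact eqvGen_isArc_of_lt hab h
    · exact .refl a
    · exact (eqvGen_isArc_of_lt hba h.symm).symm

noncomputable def arcSet (P : Finpartition (univ : Finset (Fin N))) : Finset (Fin N × Fin N) :=
  letI := Classical.decPred fun p : Fin N × Fin N => IsArc P p.1 p.2
  univ.filter fun p => IsArc P p.1 p.2

theorem mem_arcSet : (a, b) ∈ arcSet P ↔ IsArc P a b := by
  classical
  simp [arcSet]

theorem arcRel_arcSet : arcRel (arcSet P) = IsArc P := by
  funext a b
  exact propext mem_arcSet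

theorem isMatching_arcSet : IsMatching (arcSet P) where
  lt _ hp := (mem_arcSet.1 hp).1
  fst_injOn _ hp _ hq h :=
    Prod.ext h ((mem_arcSet.1 hp).snd_unique (h ▸ mem_arcSet.1 hq))
  snd_injOn _ hp _ hq h :=
    Prod.ext ((mem_arcSet.1 hp).fst_unique (h ▸ mem_arcSet.1 hq)) h

theorem partitionOf_arcSet : partitionOf (arcSet P) = P :=
  Finpartition.ext_of_part_eq_part_iff fun a b => by
    rw [part_partitionOf_eq_iff, arcRel_arcSet, eqvGen_isArc_iff]

theorem arcSet_partitionOf {M : Finset (Fin N × Fin N)} (hM : IsMatching M) :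
    arcSet (partitionOf M) = M := by
  ext ⟨a, b⟩
  rw [mem_arcSet, isArc_iff, hM.mem_iff]
  simp only [part_partitionOf_eq_iff]

noncomputable def arcSetEquiv :
    Finpartition (univ : Finset (Fin N)) ≃ {M : Finset (Fin N × Fin N) // IsMatching M} where
  toFun P := ⟨arcSet P, isMatching_arcSet⟩
  invFun M := partitionOf M.1
  left_inv _ := partitionOf_arcSet
  right_inv M := Subtype.ext (arcSet_partitionOf M.2)

theorem partitionHasKCrossing_iff (k : ℕ) :
    PartitionHasKCrossing k P ↔ HasKCrossing k (arcSet P) := by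
  simp only [PartitionHasKCrossing, HasKCrossing, mem_arcSet]

end Partition

section Braid

variable {n : ℕ}

def liftArc : Fin n × Fin n ↪ Fin (n + 1) × Fin (n + 1) :=
  Fin.castSuccEmb.prodMap (Fin.succEmb n)

theorem isMatching_map_liftArc_iff {A : Finset (Fin n × Fin n)} :
    IsMatching (A.map liftArc) ↔ IsBraid A := by
  constructor
  · intro hM
    refine ⟨fun p hp => ?_, fun p hp q hq h => ?_, fun p hp q hq h => ?_⟩
    · exact Fin.castSucc_lt_succ_iff.1 (hM.lt _ (mem_map_of_mem liftArc hp))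
    · exact liftArc.injective
        (hM.fst_injOn (mem_map_of_mem liftArc hp) (mem_map_of_mem liftArc hq)
          (congrArg Fin.castSucc h))
    · exact liftArc.injective
        (hM.snd_injOn (mem_map_of_mem liftArc hp) (mem_map_of_mem liftArc hq)
          (congrArg Fin.succ h))
  · rintro ⟨hle, hfst, hsnd⟩
    refine ⟨fun p hp => ?_, ?_, ?_⟩
    · obtain ⟨p, hpA, rfl⟩ := mem_map.1 hp
      exact Fin.castSucc_lt_succ_iff.2 (hle p hpA)
    all_goals
      rintro _ hp _ hq h
      obtain ⟨p, hpA, rfl⟩ := mem_map.1 hp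
      obtain ⟨q, hqA, rfl⟩ := mem_map.1 hq
    · exact congrArg liftArc (hfst p hpA q hqA (Fin.castSucc_injective _ h))
    · exact congrArg liftArc (hsnd p hpA q hqA (Fin.succ_injective _ h))

theorem map_preimage_liftArc {M : Finset (Fin (n + 1) × Fin (n + 1))} (hM : IsMatching M) :
    (M.preimage liftArc liftArc.injective.injOn).map liftArc = M := by
  ext ⟨a, b⟩
  simp only [mem_map, mem_preimage]
  constructor
  · rintro ⟨p, hp, hpab⟩
    exact hpab ▸ hp
  · intro h
    have hab := hM.lt _ h
    exact ⟨(a.castPred (Fin.ne_last_of_lt hab), b.pred (Fin.ne_zero_of_lt hab)),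
      by simpa [liftArc] using h, by simp [liftArc]⟩

noncomputable def braidEquiv :
    {A : Finset (Fin n × Fin n) // IsBraid A} ≃
      {M : Finset (Fin (n + 1) × Fin (n + 1)) // IsMatching M} where
  toFun A := ⟨A.1.map liftArc, isMatching_map_liftArc_iff.2 A.2⟩
  invFun M := ⟨M.1.preimage liftArc liftArc.injective.injOn,
    isMatching_map_liftArc_iff.1 ((map_preimage_liftArc M.2).symm ▸ M.2)⟩
  left_inv _ := Subtype.ext (preimage_map _ _)
  right_inv M := Subtype.ext (map_preimage_liftArc M.2)

theorem braidHasKCrossing_iff {A : Finset (Fin n × Fin n)} (k : ℕ) :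
    BraidHasKCrossing k A ↔ HasKCrossing k (A.map liftArc) := by
  constructor
  · rintro ⟨ii, jj, harc, hii, hjj, hcross⟩
    exact ⟨fun m => (ii m).castSucc, fun m => (jj m).succ,
      fun m => mem_map_of_mem liftArc (harc m), Fin.strictMono_castSucc.comp hii,
      Fin.strictMono_succ.comp hjj, fun m m' => Fin.castSucc_lt_succ_iff.2 (hcross m m')⟩
  · rintro ⟨ii, jj, harc, hii, hjj, hcross⟩
    choose p hpA hp using fun m => mem_map.1 (harc m)
    have hii' (m : Fin k) : ii m = (p m).1.castSucc := (congrArg Prod.fst (hp m)).symm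
    have hjj' (m : Fin k) : jj m = (p m).2.succ := (congrArg Prod.snd (hp m)).symm
    refine ⟨fun m => (p m).1, fun m => (p m).2, hpA, fun m m' h => ?_, fun m m' h => ?_,
      fun m m' => ?_⟩
    · simpa [hii'] using hii h
    · simpa [hjj'] using hjj h
    · simpa [hii', hjj'] using hcross m m'

end Braid

theorem partitions_eq_braids_general (k N : ℕ) (hN : 1 ≤ N) :
    Nat.card {P : Finpartition (Finset.univ : Finset (Fin N)) //
        ¬ PartitionHasKCrossing k P} =
    Nat.card {A : Finset (Fin (N - 1) × Fin (N - 1)) //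
        IsBraid A ∧ ¬ BraidHasKCrossing k A} := by
  obtain ⟨n, rfl⟩ : ∃ n, N = n + 1 := ⟨N - 1, by omega⟩
  calc Nat.card {P : Finpartition (univ : Finset (Fin (n + 1))) // ¬ PartitionHasKCrossing k P}
      = Nat.card {M : {M : Finset (Fin (n + 1) × Fin (n + 1)) // IsMatching M} //
          ¬ HasKCrossing k M.1} :=
        Nat.card_congr (arcSetEquiv.subtypeEquiv fun _ => (partitionHasKCrossing_iff k).not)
    _ = Nat.card {A : {A : Finset (Fin n × Fin n) // IsBraid A} // ¬ BraidHasKCrossing k A.1} :=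
        (Nat.card_congr (braidEquiv.subtypeEquiv fun _ => (braidHasKCrossing_iff k).not)).symm
    _ = _ :=
        Nat.card_congr (Equiv.subtypeSubtypeEquivSubtypeInter IsBraid (¬ BraidHasKCrossing k ·))

/-- the number of `k`-noncrossing partitions of `[N]` equals the
number of `k`-noncrossing braids over `[N-1]`. -/
theorem partitions_eq_braids (k N : ℕ) (hk : 3 ≤ k) (hN : 1 ≤ N) :
    Nat.card {P : Finpartition (Finset.univ : Finset (Fin N)) //
        ¬ PartitionHasKCrossing k P} =
    Nat.card {A : Finset (Fin (N - 1) × Fin (N - 1)) //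
        IsBraid A ∧ ¬ BraidHasKCrossing k A} :=
  partitions_eq_braids_general k N hN
end

section
/- Fix an integer k ≥ 3 and N ≥ 1. The number of 2-regular, k-noncrossing partitions of [N] equals the number of loop-free k-noncrossing braids over [N−1]. -/
/-!
Shift the right endpoint of every arc by one: `(i, j) ↦ (i, j + 1)`. This turns the arcs of a
braid over `[N - 1]` into arcs over `[N]`, with `i ≤ j` becoming `i < j + 1`, loops `(i, i)`
becoming arcs of length one (exactly what 2-regularity forbids) and the braid crossing condition
`i_k ≤ j_1` becoming the partition crossing condition `i_k < j_1 + 1`. A partition is the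
equivalence closure of its arcs, and conversely a strictly increasing relation in which every
vertex is a left and a right endpoint at most once is the arc relation of the partition it
generates; so the shift is a bijection between the two families.
-/

open Finset

open Relation

theorem Relation.eqvGen_iff_reflTransGen_or {α : Type*} {r : α → α → Prop}
    (hl : Relator.LeftUnique r) (hr : Relator.RightUnique r) {a b : α} :
    EqvGen r a b ↔ ReflTransGen r a b ∨ ReflTransGen r b a := by
  refine ⟨fun h => ?_, ?_⟩
  · induction h with
    | rel _ _ h => exact .inl (.single h)
    | refl => exact .inl .refl
    | symm _ _ _ ih => exact ih.symm
    | trans x y z _ _ ihxy ihyz =>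
      rcases ihxy with hxy | hyx <;> rcases ihyz with hyz | hzy
      · exact .inl (hxy.trans hyz)
      · have := ReflTransGen.total_of_right_unique (r := Function.swap r)
          (fun _ _ _ h h' => hl h h') (reflTransGen_swap.mpr hxy) (reflTransGen_swap.mpr hzy)
        simpa only [reflTransGen_swap, or_comm] using this
      · exact ReflTransGen.total_of_right_unique hr hyx hyz
      · exact .inr (hzy.trans hyx)
  · rintro (h | h)
    · exact EqvGen.reflTransGen_le_eqvGen r _ _ h
    · exact .symm _ _ (EqvGen.reflTransGen_le_eqvGen r _ _ h)

theorem Relation.ReflTransGen.le_of_forall_rel_lt {α : Type*} [Preorder α]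
    {r : α → α → Prop} (hlt : ∀ ⦃a b⦄, r a b → a < b) {a b : α}
    (h : ReflTransGen r a b) : a ≤ b := by
  induction h with
  | refl => exact le_rfl
  | tail _ hbc ih => exact ih.trans (hlt hbc).le

theorem Finpartition.ext_part_s9 {α : Type*} [DecidableEq α] {s : Finset α}
    {P Q : Finpartition s} (h : ∀ a, P.part a = Q.part a) : P = Q := by
  ext B
  constructor <;> intro hB
  · obtain ⟨a, ha, rfl⟩ := P.part_surjOn hB
    exact h a ▸ Q.part_mem.2 ha
  · obtain ⟨a, ha, rfl⟩ := Q.part_surjOn hB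
    exact (h a).symm ▸ P.part_mem.2 ha

theorem Finpartition.mem_part_comm {α : Type*} [DecidableEq α] {s : Finset α}
    (P : Finpartition s) {a b : α} : b ∈ P.part a ↔ a ∈ P.part b := by
  simp only [Finpartition.mem_part_iff_exists]
  exact exists_congr fun _ => and_congr_right fun _ => and_comm

section Partition

variable {N : ℕ} {P : Finpartition (univ : Finset (Fin N))}

theorem isArc_iff_mem_part {a b : Fin N} :
    IsArc P a b ↔ a < b ∧ b ∈ P.part a ∧ ∀ c ∈ P.part a, ¬(a < c ∧ c < b) := by
  constructor
  · rintro ⟨hab, B, hB, ha, hb, hbetween⟩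
    rw [P.part_eq_of_mem hB ha]
    exact ⟨hab, hb, hbetween⟩
  · rintro ⟨hab, hb, hbetween⟩
    exact ⟨hab, P.part a, P.part_mem.2 (mem_univ a), P.mem_part (mem_univ a), hb, hbetween⟩

theorem isArc_leftUnique : Relator.LeftUnique (IsArc P) := by
  rintro a a' b ⟨hab, B, hB, ha, hb, hbetween⟩ ⟨hab', B', hB', ha', hb', hbetween'⟩
  obtain rfl := P.eq_of_mem_parts hB hB' hb hb'
  by_contra hne
  rcases lt_or_gt_of_ne hne with h | h
  · exact hbetween a' ha' ⟨h, hab'⟩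
  · exact hbetween' a ha ⟨h, hab⟩

theorem isArc_rightUnique : Relator.RightUnique (IsArc P) := by
  rintro a b b' ⟨hab, B, hB, ha, hb, hbetween⟩ ⟨hab', B', hB', ha', hb', hbetween'⟩
  obtain rfl := P.eq_of_mem_parts hB hB' ha ha'
  by_contra hne
  rcases lt_or_gt_of_ne hne with h | h
  · exact hbetween' b hb ⟨hab, h⟩
  · exact hbetween b' hb' ⟨hab', h⟩

theorem reflTransGen_isArc_of_mem_part {a b : Fin N} (hab : a ≤ b) (hb : b ∈ P.part a) :
    ReflTransGen (IsArc P) a b := by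
  induction b using WellFoundedLT.induction with
  | ind b ih =>
  rcases hab.eq_or_lt with rfl | hab
  · exact .refl
  have ha : a ∈ (P.part a).filter (· < b) := mem_filter.2 ⟨P.mem_part (mem_univ a), hab⟩
  set c := ((P.part a).filter (· < b)).max' ⟨a, ha⟩
  obtain ⟨hca, hcb⟩ := mem_filter.1 (max'_mem _ ⟨a, ha⟩)
  have hpart : P.part c = P.part a := P.part_eq_of_mem (P.part_mem.2 (mem_univ a)) hca
  refine (ih c hcb (le_max' _ a ha) hca).tail (isArc_iff_mem_part.2 ⟨hcb, hpart ▸ hb, ?_⟩)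
  rintro d hd ⟨hcd, hdb⟩
  exact (le_max' _ d (mem_filter.2 ⟨hpart ▸ hd, hdb⟩)).not_gt hcd

theorem mem_part_iff_eqvGen_isArc {a b : Fin N} : b ∈ P.part a ↔ EqvGen (IsArc P) a b := by
  constructor
  · intro hb
    rcases le_total a b with hab | hba
    · exact EqvGen.reflTransGen_le_eqvGen _ _ _ (reflTransGen_isArc_of_mem_part hab hb)
    · exact .symm _ _ (EqvGen.reflTransGen_le_eqvGen _ _ _
        (reflTransGen_isArc_of_mem_part hba (P.mem_part_comm.1 hb)))
  · intro h
    have hker : Setoid.ker P.part a b := by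
      refine (Setoid.ker P.part).iseqv.eqvGen_iff.1 (EqvGen.mono (fun x y hxy => ?_) a b h)
      exact (P.part_eq_of_mem (P.part_mem.2 (mem_univ x)) (isArc_iff_mem_part.1 hxy).2.1).symm
    exact hker ▸ P.mem_part (mem_univ b)

theorem isArc_iff_of_mem_part_iff_eqvGen {r : Fin N → Fin N → Prop}
    (hlt : ∀ ⦃a b⦄, r a b → a < b) (hl : Relator.LeftUnique r) (hr : Relator.RightUnique r)
    (hP : ∀ a b, b ∈ P.part a ↔ EqvGen r a b) {a b : Fin N} : IsArc P a b ↔ r a b := by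
  have mem_part_iff {a b : Fin N} (hab : a ≤ b) : b ∈ P.part a ↔ ReflTransGen r a b := by
    rw [hP, eqvGen_iff_reflTransGen_or hl hr]
    exact or_iff_left_of_imp fun hba => (le_antisymm hab (hba.le_of_forall_rel_lt hlt)) ▸ .refl
  rw [isArc_iff_mem_part]
  constructor
  · rintro ⟨hab, hb, hbetween⟩
    rcases ((mem_part_iff hab.le).1 hb).cases_head with rfl | ⟨c, hac, hcb⟩
    · exact absurd hab (lt_irrefl a)
    obtain rfl | hcb' := (hcb.le_of_forall_rel_lt hlt).eq_or_lt
    · exact hac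
    · exact absurd ⟨hlt hac, hcb'⟩ (hbetween c ((mem_part_iff (hlt hac).le).2 (.single hac)))
  · intro hab
    refine ⟨hlt hab, (mem_part_iff (hlt hab).le).2 (.single hab), ?_⟩
    rintro c hc ⟨hac, hcb⟩
    rcases ((mem_part_iff hac.le).1 hc).cases_head with rfl | ⟨d, had, hdc⟩
    · exact lt_irrefl a hac
    · obtain rfl := hr hab had
      exact (hdc.le_of_forall_rel_lt hlt).not_gt hcb

theorem twoRegular_iff_forall_isArc :
    TwoRegular P ↔ ∀ a b, IsArc P a b → (a : ℕ) + 1 < b := by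
  constructor
  · intro h a b hab
    obtain ⟨hlt, B, hB, ha, hb, -⟩ := hab
    have := le_abs.1 (h B hB a ha b hb hlt.ne)
    have : (a : ℕ) < b := hlt
    omega
  · intro h B hB x hx y hy hne
    wlog hxy : x < y generalizing x y
    · exact abs_sub_comm (x : ℤ) y ▸ this y hy x hx hne.symm (hne.symm.lt_of_le (not_lt.1 hxy))
    have hxy' : y ∈ P.part x := P.part_eq_of_mem hB hx ▸ hy
    rcases (reflTransGen_isArc_of_mem_part hxy.le hxy').cases_head with rfl | ⟨w, hxw, hwy⟩
    · exact absurd hxy (lt_irrefl x)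
    have : (w : ℕ) ≤ y := hwy.le_of_forall_rel_lt fun _ _ h => h.1
    have := h x w hxw
    exact le_abs.2 (.inr (by omega))

end Partition

section Braid

variable {M : ℕ} {A : Finset (Fin M × Fin M)}

def shiftedArc (A : Finset (Fin M × Fin M)) (a b : Fin (M + 1)) : Prop :=
  ∃ q ∈ A, q.1.castSucc = a ∧ q.2.succ = b

@[simp]
theorem shiftedArc_castSucc_succ {i j : Fin M} :
    shiftedArc A i.castSucc j.succ ↔ (i, j) ∈ A := by
  simp [shiftedArc]

theorem shiftedArc_lt (hA : IsBraid A) ⦃a b : Fin (M + 1)⦄ (h : shiftedArc A a b) :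
    a < b := by
  obtain ⟨q, hq, rfl, rfl⟩ := h
  exact Fin.castSucc_lt_succ_iff.2 (hA.1 q hq)

theorem shiftedArc_leftUnique (hA : IsBraid A) : Relator.LeftUnique (shiftedArc A) := by
  rintro _ _ _ ⟨q, hq, rfl, hb⟩ ⟨q', hq', rfl, rfl⟩
  rw [hA.2.2 q hq q' hq' (Fin.succ_injective _ hb)]

theorem shiftedArc_rightUnique (hA : IsBraid A) : Relator.RightUnique (shiftedArc A) := by
  rintro _ _ _ ⟨q, hq, ha, rfl⟩ ⟨q', hq', rfl, rfl⟩
  rw [hA.2.1 q hq q' hq' (Fin.castSucc_injective _ ha)]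

theorem partitionHasKCrossing_iff_braidHasKCrossing {k : ℕ}
    {P : Finpartition (univ : Finset (Fin (M + 1)))}
    (hPA : ∀ a b, IsArc P a b ↔ shiftedArc A a b) :
    PartitionHasKCrossing k P ↔ BraidHasKCrossing k A := by
  constructor
  · rintro ⟨ii, jj, harc, hii, hjj, hij⟩
    choose q hq hqi hqj using fun m => (hPA _ _).1 (harc m)
    refine ⟨fun m => (q m).1, fun m => (q m).2, hq, fun m m' h => ?_, fun m m' h => ?_,
      fun m m' => ?_⟩
    · simpa only [← hqi, Fin.castSucc_lt_castSucc_iff] using hii h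
    · simpa only [← hqj, Fin.succ_lt_succ_iff] using hjj h
    · simpa only [← hqi, ← hqj, Fin.castSucc_lt_succ_iff] using hij m m'
  · rintro ⟨ii, jj, harc, hii, hjj, hij⟩
    refine ⟨fun m => (ii m).castSucc, fun m => (jj m).succ, fun m => ?_,
      Fin.strictMono_castSucc.comp hii, Fin.strictMono_succ.comp hjj,
      fun m m' => Fin.castSucc_lt_succ_iff.2 (hij m m')⟩
    exact (hPA _ _).2 (shiftedArc_castSucc_succ.2 (harc m))

theorem twoRegular_iff_braidLoopFree {P : Finpartition (univ : Finset (Fin (M + 1)))}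
    (hA : IsBraid A) (hPA : ∀ a b, IsArc P a b ↔ shiftedArc A a b) :
    TwoRegular P ↔ BraidLoopFree A := by
  simp only [twoRegular_iff_forall_isArc, hPA]
  constructor
  · intro h p hp hloop
    have := h _ _ ⟨p, hp, rfl, rfl⟩
    simp [hloop] at this
  · rintro h _ _ ⟨p, hp, rfl, rfl⟩
    have : (p.1 : ℕ) < p.2 := lt_of_le_of_ne (hA.1 p hp) (Fin.val_ne_of_ne (h p hp))
    simpa only [Fin.val_castSucc, Fin.val_succ, add_lt_add_iff_right]

open Classical in
noncomputable def partitionOfBraid (A : Finset (Fin M × Fin M)) :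
    Finpartition (univ : Finset (Fin (M + 1))) :=
  .ofSetoid (EqvGen.setoid (shiftedArc A))

theorem mem_part_partitionOfBraid {a b : Fin (M + 1)} :
    b ∈ (partitionOfBraid A).part a ↔ EqvGen (shiftedArc A) a b := by
  classical
  exact Finpartition.mem_part_ofSetoid_iff_rel

theorem isArc_partitionOfBraid (hA : IsBraid A) {a b : Fin (M + 1)} :
    IsArc (partitionOfBraid A) a b ↔ shiftedArc A a b :=
  isArc_iff_of_mem_part_iff_eqvGen (shiftedArc_lt hA) (shiftedArc_leftUnique hA)
    (shiftedArc_rightUnique hA) fun _ _ => mem_part_partitionOfBraid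

open Classical in
noncomputable def braidOfPartition (P : Finpartition (univ : Finset (Fin (M + 1)))) :
    Finset (Fin M × Fin M) :=
  univ.filter fun q => IsArc P q.1.castSucc q.2.succ

variable {P : Finpartition (univ : Finset (Fin (M + 1)))}

theorem mem_braidOfPartition {q : Fin M × Fin M} :
    q ∈ braidOfPartition P ↔ IsArc P q.1.castSucc q.2.succ := by
  classical
  simp [braidOfPartition]

theorem shiftedArc_braidOfPartition {a b : Fin (M + 1)} :
    shiftedArc (braidOfPartition P) a b ↔ IsArc P a b := by
  constructor
  · rintro ⟨q, hq, rfl, rfl⟩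
    exact mem_braidOfPartition.1 hq
  · intro h
    obtain ⟨i, rfl⟩ : ∃ i : Fin M, i.castSucc = a :=
      ⟨a.castPred (Fin.ne_last_of_lt h.1), Fin.castSucc_castPred _ _⟩
    obtain ⟨j, rfl⟩ : ∃ j : Fin M, j.succ = b :=
      ⟨b.pred (Fin.ne_zero_of_lt h.1), Fin.succ_pred _ _⟩
    exact shiftedArc_castSucc_succ.2 (mem_braidOfPartition.2 h)

theorem isBraid_braidOfPartition : IsBraid (braidOfPartition P) := by
  refine ⟨fun p hp => ?_, fun p hp q hq h => ?_, fun p hp q hq h => ?_⟩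
  · exact Fin.castSucc_lt_succ_iff.1 (mem_braidOfPartition.1 hp).1
  · have := isArc_rightUnique (mem_braidOfPartition.1 hp) (h ▸ mem_braidOfPartition.1 hq)
    exact Prod.ext h (Fin.succ_injective _ this)
  · have := isArc_leftUnique (mem_braidOfPartition.1 hp) (h ▸ mem_braidOfPartition.1 hq)
    exact Prod.ext (Fin.castSucc_injective _ this) h

theorem partitionOfBraid_braidOfPartition : partitionOfBraid (braidOfPartition P) = P := by
  have hrel : shiftedArc (braidOfPartition P) = IsArc P := by
    ext a b
    exact shiftedArc_braidOfPartition
  refine Finpartition.ext_part_s9 fun a => Finset.ext fun b => ?_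
  rw [mem_part_partitionOfBraid, hrel, mem_part_iff_eqvGen_isArc]

theorem braidOfPartition_partitionOfBraid (hA : IsBraid A) :
    braidOfPartition (partitionOfBraid A) = A := by
  ext q
  rw [mem_braidOfPartition, isArc_partitionOfBraid hA, shiftedArc_castSucc_succ]

end Braid

noncomputable def twoRegularPartitionEquivLoopFreeBraid (k M : ℕ) :
    {P : Finpartition (univ : Finset (Fin (M + 1))) //
        ¬ PartitionHasKCrossing k P ∧ TwoRegular P} ≃
    {A : Finset (Fin M × Fin M) //
        IsBraid A ∧ ¬ BraidHasKCrossing k A ∧ BraidLoopFree A} where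
  toFun P :=
    have hPA a b := shiftedArc_braidOfPartition (P := P.1) (a := a) (b := b) |>.symm
    ⟨braidOfPartition P, isBraid_braidOfPartition,
      (partitionHasKCrossing_iff_braidHasKCrossing hPA).not.1 P.2.1,
      (twoRegular_iff_braidLoopFree isBraid_braidOfPartition hPA).1 P.2.2⟩
  invFun A :=
    have hPA a b := isArc_partitionOfBraid A.2.1 (a := a) (b := b)
    ⟨partitionOfBraid A, (partitionHasKCrossing_iff_braidHasKCrossing hPA).not.2 A.2.2.1,
      (twoRegular_iff_braidLoopFree A.2.1 hPA).2 A.2.2.2⟩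
  left_inv _ := Subtype.ext partitionOfBraid_braidOfPartition
  right_inv A := Subtype.ext (braidOfPartition_partitionOfBraid A.2.1)

theorem twoRegular_partitions_eq_loopFree_braids_general (k N : ℕ) (hN : 1 ≤ N) :
    Nat.card {P : Finpartition (Finset.univ : Finset (Fin N)) //
        ¬ PartitionHasKCrossing k P ∧ TwoRegular P} =
    Nat.card {A : Finset (Fin (N - 1) × Fin (N - 1)) //
        IsBraid A ∧ ¬ BraidHasKCrossing k A ∧ BraidLoopFree A} := by
  obtain ⟨M, rfl⟩ : ∃ M, N = M + 1 := ⟨N - 1, by omega⟩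
  exact Nat.card_congr (twoRegularPartitionEquivLoopFreeBraid k M)

/-- the number of `2`-regular, `k`-noncrossing partitions of `[N]`
equals the number of loop-free `k`-noncrossing braids over `[N-1]`. -/
theorem twoRegular_partitions_eq_loopFree_braids (k N : ℕ) (hk : 3 ≤ k) (hN : 1 ≤ N) :
    Nat.card {P : Finpartition (Finset.univ : Finset (Fin N)) //
        ¬ PartitionHasKCrossing k P ∧ TwoRegular P} =
    Nat.card {A : Finset (Fin (N - 1) × Fin (N - 1)) //
        IsBraid A ∧ ¬ BraidHasKCrossing k A ∧ BraidLoopFree A} :=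
  twoRegular_partitions_eq_loopFree_braids_general k N hN
end

section
/- Fix an integer k ≥ 3, integers ℓ ≥ 0 and 0 ≤ h ≤ ℓ, and ν ∈ W_{k−1}. The number of pairs (w, S), where w = (v_0,…,v_{2ℓ}) is a B_{W_{k−1}}-walk of length 2ℓ ending at ν and S is an h-element subset of {1,…,ℓ} such that for every q ∈ S one has v_{2q−1} − v_{2q−2} = e_1 and v_{2q} − v_{2q−1} = −e_1, equals C(ℓ,h) · σ^ν_{k,2ℓ−2h}, where C(ℓ,h) is the binomial coefficient. -/
open Finset

/-!
Grouping the pairs `(w, S)` by `S`, it suffices to show that for each `h`-subset `S` of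
`{1, …, ℓ}` the walks of length `2ℓ` carrying `(+e₁, -e₁)` at every double step in `S` are in
bijection with the walks of length `2ℓ - 2h`. Cutting out the double step at the largest
`q ∈ S` is a bijection onto the walks of length `2ℓ - 2` with loops at `S \ {q}`: since such a
loop returns to its base point, what remains is still a walk, and conversely a loop can be
inserted at any point of `W_{k-1}`, which is closed under adding `e₁`.
-/

variable {k : ℕ} {D : Pt k → Prop}

theorem plusStep_eOne (hk : 1 < k) : plusStep (eOne k) :=
  ⟨⟨1, hk⟩, funext fun j => by simp [eOne, eVec]⟩

theorem minusStep_neg_eOne (hk : 1 < k) : minusStep (-eOne k) :=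
  let ⟨i, hi⟩ := plusStep_eOne hk
  ⟨i, by rw [hi]⟩

theorem inW.add_eOne {v : Pt k} (hv : inW v) : inW (v + eOne k) := by
  refine ⟨fun i j hij => ?_, fun i => ?_⟩
  · have hj : (j : ℕ) ≠ 0 := by have : (i : ℕ) < j := hij; omega
    have := hv.1 hij
    simp only [Pi.add_apply, eOne, hj, if_false]
    split_ifs <;> omega
  · have := hv.2 i
    simp only [Pi.add_apply, eOne]
    split_ifs <;> omega

/-- The condition `IsBWalk` imposes on the step from time `t` to time `t + 1`. -/
def BStep (t : ℕ) (d : Pt k) : Prop :=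
  (Odd (t + 1) → plusStep d) ∧ (Even (t + 1) → minusStep d)

theorem bStep_add_two {t : ℕ} {d : Pt k} : BStep (t + 2) d ↔ BStep t d := by
  simp [BStep, parity_simps]

theorem bStep_of_even {t : ℕ} {d : Pt k} (ht : Even t) (hd : plusStep d) : BStep t d :=
  ⟨fun _ => hd, fun h => absurd h (by simpa [parity_simps] using ht)⟩

theorem bStep_of_odd {t : ℕ} {d : Pt k} (ht : Odd t) (hd : minusStep d) : BStep t d :=
  ⟨fun h => absurd h (by simpa [parity_simps] using ht), fun _ => hd⟩

/-- `q ∈ S` marks the `q`-th double step, from time `2q - 2` over `2q - 1` to `2q`. -/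
def LoopsAt {L : ℕ} (w : Fin (L + 1) → Pt k) (S : Finset ℕ) : Prop :=
  ∀ q ∈ S, ∀ hq : 2 * q < L + 1,
    w ⟨2 * q - 1, by omega⟩ - w ⟨2 * q - 2, by omega⟩ = eOne k ∧
    w ⟨2 * q, hq⟩ - w ⟨2 * q - 1, by omega⟩ = -eOne k

theorem LoopsAt.apply_eq {L q : ℕ} {w : Fin (L + 1) → Pt k} {S : Finset ℕ} (hw : LoopsAt w S)
    (hqS : q ∈ S) (hq : 2 * q < L + 1) :
    w ⟨2 * q - 1, by omega⟩ = w ⟨2 * q - 2, by omega⟩ + eOne k ∧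
      w ⟨2 * q, hq⟩ = w ⟨2 * q - 2, by omega⟩ := by
  obtain ⟨h₁, h₂⟩ := hw q hqS hq
  rw [sub_eq_iff_eq_add'] at h₁
  rw [sub_eq_iff_eq_add', h₁] at h₂
  exact ⟨h₁, by rw [h₂]; abel⟩

def LoopedWalks (D : Pt k → Prop) (L : ℕ) (ν : Pt k) (S : Finset ℕ) : Type :=
  {w : Fin (L + 1) → Pt k // IsBWalk D L w ∧ w (Fin.last L) = ν ∧ LoopsAt w S}

section Loops

variable {L q : ℕ}

def insertLoop (hq : 2 * q ≤ L + 2) (w : Fin (L + 1) → Pt k) : Fin (L + 3) → Pt k :=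
  fun t => if _ : (t : ℕ) + 1 < 2 * q then w ⟨t, by omega⟩
    else if (t : ℕ) + 1 = 2 * q then w ⟨2 * q - 2, by omega⟩ + eOne k
    else w ⟨(t : ℕ) - 2, by omega⟩

def deleteLoop (q : ℕ) (u : Fin (L + 3) → Pt k) : Fin (L + 1) → Pt k :=
  fun t => if (t : ℕ) + 1 < 2 * q then u ⟨t, by omega⟩ else u ⟨t + 2, by omega⟩

variable (hq : 2 * q ≤ L + 2)

theorem insertLoop_apply_of_lt (w : Fin (L + 1) → Pt k) {t : ℕ} (ht : t < L + 3)
    (h : t + 1 < 2 * q) : insertLoop hq w ⟨t, ht⟩ = w ⟨t, by omega⟩ :=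
  dif_pos h

theorem insertLoop_apply_peak (w : Fin (L + 1) → Pt k) {t : ℕ} (ht : t < L + 3)
    (h : t + 1 = 2 * q) : insertLoop hq w ⟨t, ht⟩ = w ⟨2 * q - 2, by omega⟩ + eOne k := by
  simp only [insertLoop, h, lt_irrefl, dite_false, if_true]

theorem insertLoop_apply_of_le (w : Fin (L + 1) → Pt k) {t s : ℕ} (ht : t < L + 3)
    (h : 2 * q ≤ t) (hs : s + 2 = t) : insertLoop hq w ⟨t, ht⟩ = w ⟨s, by omega⟩ := by
  simp only [insertLoop, show ¬t + 1 < 2 * q by omega, show t + 1 ≠ 2 * q by omega,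
    dite_false, if_false, show t - 2 = s by omega]

theorem deleteLoop_apply_of_lt (u : Fin (L + 3) → Pt k) {t : ℕ} (ht : t < L + 1)
    (h : t + 1 < 2 * q) : deleteLoop q u ⟨t, ht⟩ = u ⟨t, by omega⟩ :=
  if_pos h

/-- At time `2q - 2` this uses that the loop returns to its base point. -/
theorem deleteLoop_apply_of_le {u : Fin (L + 3) → Pt k}
    (hret : u ⟨2 * q, by omega⟩ = u ⟨2 * q - 2, by omega⟩) {t : ℕ} (ht : t < L + 1)
    (h : 2 * q ≤ t + 2) : deleteLoop q u ⟨t, ht⟩ = u ⟨t + 2, by omega⟩ := by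
  by_cases h' : t + 1 < 2 * q
  · obtain rfl : t = 2 * q - 2 := by omega
    rw [deleteLoop_apply_of_lt u ht h', ← hret]
    simp only [show 2 * q - 2 + 2 = 2 * q by omega]
  · exact if_neg h'

theorem isBWalk_insertLoop (hk : 1 < k) (hD : ∀ v, D v → D (v + eOne k)) (hq1 : 1 ≤ q)
    {w : Fin (L + 1) → Pt k} (hw : IsBWalk D L w) : IsBWalk D (L + 2) (insertLoop hq w) := by
  refine ⟨(insertLoop_apply_of_lt hq w _ (by omega)).trans hw.1, fun t => ?_, fun t ht => ?_⟩
  · unfold insertLoop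
    split_ifs
    · exact hw.2.1 _
    · exact hD _ (hw.2.1 _)
    · exact hw.2.1 _
  show BStep t _
  rcases lt_trichotomy (t + 2) (2 * q) with h | h | h
  · rw [insertLoop_apply_of_lt hq w _ (by omega), insertLoop_apply_of_lt hq w _ (by omega)]
    exact hw.2.2 t (by omega)
  · obtain rfl : t = 2 * q - 2 := by omega
    rw [insertLoop_apply_peak hq w _ (by omega), insertLoop_apply_of_lt hq w _ (by omega),
      add_sub_cancel_left]
    exact bStep_of_even ⟨q - 1, by omega⟩ (plusStep_eOne hk)
  by_cases h' : t + 1 = 2 * q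
  · obtain rfl : t = 2 * q - 1 := by omega
    rw [insertLoop_apply_of_le hq w _ (by omega) (show 2 * q - 2 + 2 = 2 * q - 1 + 1 by omega),
      insertLoop_apply_peak hq w _ h', sub_add_cancel_left]
    exact bStep_of_odd ⟨q - 1, by omega⟩ (minusStep_neg_eOne hk)
  obtain ⟨s, rfl⟩ : ∃ s, t = s + 2 := ⟨t - 2, by omega⟩
  rw [insertLoop_apply_of_le hq w _ (by omega) (show s + 1 + 2 = s + 2 + 1 by omega),
    insertLoop_apply_of_le hq w _ (by omega) rfl]
  exact bStep_add_two.2 (hw.2.2 s (by omega))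

theorem isBWalk_deleteLoop (hq1 : 1 ≤ q) {u : Fin (L + 3) → Pt k}
    (hret : u ⟨2 * q, by omega⟩ = u ⟨2 * q - 2, by omega⟩) (hu : IsBWalk D (L + 2) u) :
    IsBWalk D L (deleteLoop q u) := by
  refine ⟨(deleteLoop_apply_of_lt u _ (by omega)).trans hu.1, fun t => ?_, fun t ht => ?_⟩
  · unfold deleteLoop
    split_ifs
    · exact hu.2.1 _
    · exact hu.2.1 _
  show BStep t _
  by_cases h : t + 2 < 2 * q
  · rw [deleteLoop_apply_of_lt u _ (by omega), deleteLoop_apply_of_lt u _ (by omega)]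
    exact hu.2.2 t (by omega)
  · rw [deleteLoop_apply_of_le hq hret _ (by omega), deleteLoop_apply_of_le hq hret _ (by omega)]
    exact bStep_add_two.1 (hu.2.2 (t + 2) (by omega))

theorem insertLoop_last (w : Fin (L + 1) → Pt k) :
    insertLoop hq w (Fin.last (L + 2)) = w (Fin.last L) :=
  insertLoop_apply_of_le hq w (Nat.lt_succ_self _) hq rfl

theorem deleteLoop_last {u : Fin (L + 3) → Pt k}
    (hret : u ⟨2 * q, by omega⟩ = u ⟨2 * q - 2, by omega⟩) :
    deleteLoop q u (Fin.last L) = u (Fin.last (L + 2)) :=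
  deleteLoop_apply_of_le hq hret (Nat.lt_succ_self _) hq

theorem loopsAt_insertLoop (hq1 : 1 ≤ q) {w : Fin (L + 1) → Pt k} {S : Finset ℕ}
    (hw : LoopsAt w S) (hS : ∀ x ∈ S, x < q) : LoopsAt (insertLoop hq w) (insert q S) := by
  intro x hx hx2
  rcases mem_insert.1 hx with rfl | hxS
  · rw [insertLoop_apply_peak hq w _ (by omega), insertLoop_apply_of_lt hq w _ (by omega),
      insertLoop_apply_of_le hq w (s := 2 * x - 2) _ le_rfl (by omega)]
    simp
  · have := hS x hxS
    rw [insertLoop_apply_of_lt hq w _ (by omega), insertLoop_apply_of_lt hq w _ (by omega),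
      insertLoop_apply_of_lt hq w _ (by omega)]
    exact hw x hxS (by omega)

theorem loopsAt_deleteLoop {u : Fin (L + 3) → Pt k} {S : Finset ℕ} (hu : LoopsAt u S)
    (hS : ∀ x ∈ S, x < q) : LoopsAt (deleteLoop q u) S := by
  intro x hxS hx2
  have := hS x hxS
  rw [deleteLoop_apply_of_lt u _ (by omega), deleteLoop_apply_of_lt u _ (by omega),
    deleteLoop_apply_of_lt u _ (by omega)]
  exact hu x hxS (by omega)

theorem deleteLoop_insertLoop (w : Fin (L + 1) → Pt k) :
    deleteLoop q (insertLoop hq w) = w := by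
  funext ⟨t, ht⟩
  by_cases h : t + 1 < 2 * q
  · rw [deleteLoop_apply_of_lt _ _ h, insertLoop_apply_of_lt hq w _ h]
  · exact (if_neg h).trans (insertLoop_apply_of_le hq w (t := t + 2) _ (by omega) rfl)

theorem insertLoop_deleteLoop (hq1 : 1 ≤ q) {u : Fin (L + 3) → Pt k}
    (hpeak : u ⟨2 * q - 1, by omega⟩ = u ⟨2 * q - 2, by omega⟩ + eOne k)
    (hret : u ⟨2 * q, by omega⟩ = u ⟨2 * q - 2, by omega⟩) :
    insertLoop hq (deleteLoop q u) = u := by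
  funext ⟨t, ht⟩
  rcases lt_trichotomy (t + 1) (2 * q) with h | h | h
  · rw [insertLoop_apply_of_lt hq _ _ h, deleteLoop_apply_of_lt _ _ h]
  · obtain rfl : t = 2 * q - 1 := by omega
    rw [insertLoop_apply_peak hq _ _ h, deleteLoop_apply_of_lt _ _ (by omega), hpeak]
  · obtain ⟨s, rfl⟩ : ∃ s, t = s + 2 := ⟨t - 2, by omega⟩
    rw [insertLoop_apply_of_le hq _ _ (by omega) rfl, deleteLoop_apply_of_le hq hret _ (by omega)]

end Loops

variable {ν : Pt k}

def loopInsertionEquiv (hk : 1 < k) (hD : ∀ v, D v → D (v + eOne k)) {L q : ℕ} (hq1 : 1 ≤ q)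
    (hq : 2 * q ≤ L + 2) {S : Finset ℕ} (hS : ∀ x ∈ S, x < q) :
    LoopedWalks D L ν S ≃ LoopedWalks D (L + 2) ν (insert q S) where
  toFun w := ⟨insertLoop hq w.1, isBWalk_insertLoop hq hk hD hq1 w.2.1,
    (insertLoop_last hq w.1).trans w.2.2.1, loopsAt_insertLoop hq hq1 w.2.2.2 hS⟩
  invFun u :=
    have hloop := u.2.2.2.apply_eq (mem_insert_self q S) (by omega)
    ⟨deleteLoop q u.1, isBWalk_deleteLoop hq hq1 hloop.2 u.2.1,
      (deleteLoop_last hq hloop.2).trans u.2.2.1,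
      loopsAt_deleteLoop (fun x hx => u.2.2.2 x (mem_insert_of_mem hx)) hS⟩
  left_inv w := Subtype.ext (deleteLoop_insertLoop hq w.1)
  right_inv u :=
    have hloop := u.2.2.2.apply_eq (mem_insert_self q S) (by omega)
    Subtype.ext (insertLoop_deleteLoop hq hq1 hloop.1 hloop.2)

theorem nonempty_loopedWalks_equiv (hk : 1 < k) (hD : ∀ v, D v → D (v + eOne k))
    {ℓ : ℕ} {S : Finset ℕ} (hS : S ⊆ Icc 1 ℓ) :
    Nonempty (LoopedWalks D (2 * ℓ) ν S ≃ LoopedWalks D (2 * (ℓ - #S)) ν ∅) := by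
  induction S using Finset.induction_on_max generalizing ℓ with
  | empty => exact ⟨Equiv.refl _⟩
  | insert q S hlt ih =>
    obtain ⟨hq1, hqℓ⟩ := mem_Icc.1 (hS (mem_insert_self q S))
    obtain ⟨m, rfl⟩ : ∃ m, ℓ = m + 1 := ⟨ℓ - 1, by omega⟩
    have hSm : S ⊆ Icc 1 m := fun x hx =>
      mem_Icc.2 ⟨(mem_Icc.1 (hS (mem_insert_of_mem hx))).1, by have := hlt x hx; omega⟩
    obtain ⟨e⟩ := ih hSm
    rw [card_insert_of_notMem fun h => lt_irrefl q (hlt q h),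
      show 2 * (m + 1) = 2 * m + 2 by ring, show m + 1 - (#S + 1) = m - #S by omega]
    exact ⟨(loopInsertionEquiv hk hD hq1 (by omega) hlt).symm.trans e⟩

theorem card_loopedWalks_empty (L : ℕ) :
    Nat.card (LoopedWalks inW L ν ∅) = sigmaCount k L ν :=
  Nat.card_congr <| Equiv.subtypeEquivRight fun _ =>
    and_congr_right' <| and_iff_left fun _ hq => absurd hq (notMem_empty _)

/-- the number of pairs `(w, S)` of a `ℬ_{W_{k-1}}`-walk `w` of length
`2ℓ` ending at `ν` together with an `h`-element subset `S ⊆ {1,…,ℓ}` of positions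
carrying the step pair `(+e_1, -e_1)` equals `C(ℓ,h) · σ^ν_{k,2ℓ-2h}`. -/
theorem marked_walks_count (k ℓ h : ℕ) (hk : 3 ≤ k) (ν : Pt k) :
    Nat.card {p : (Fin (2 * ℓ + 1) → Pt k) × Finset ℕ //
        IsBWalk (inW (k := k)) (2 * ℓ) p.1 ∧ p.1 (Fin.last (2 * ℓ)) = ν ∧
        p.2 ⊆ Finset.Icc 1 ℓ ∧ p.2.card = h ∧
        ∀ q : ℕ, q ∈ p.2 → ∀ hq : 2 * q < 2 * ℓ + 1,
          p.1 ⟨2 * q - 1, by omega⟩ - p.1 ⟨2 * q - 2, by omega⟩ = eOne k ∧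
          p.1 ⟨2 * q, hq⟩ - p.1 ⟨2 * q - 1, by omega⟩ = -eOne k} =
      ℓ.choose h * sigmaCount k (2 * (ℓ - h)) ν := by
  have fiber (S : (Icc 1 ℓ).powersetCard h) :
      Nonempty (LoopedWalks inW (2 * ℓ) ν S ≃ LoopedWalks inW (2 * (ℓ - h)) ν ∅) := by
    obtain ⟨hS, hcard⟩ := mem_powersetCard.1 S.2
    simpa only [hcard] using nonempty_loopedWalks_equiv (by omega) (fun _ => inW.add_eOne) hS
  calc _ = Nat.card (Σ S : (Icc 1 ℓ).powersetCard h, LoopedWalks inW (2 * ℓ) ν S) :=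
        Nat.card_congr
          { toFun p := ⟨⟨p.1.2, mem_powersetCard.2 ⟨p.2.2.2.1, p.2.2.2.2.1⟩⟩,
              p.1.1, p.2.1, p.2.2.1, p.2.2.2.2.2⟩
            invFun s := ⟨(s.2.1, s.1), s.2.2.1, s.2.2.2.1, (mem_powersetCard.1 s.1.2).1,
              (mem_powersetCard.1 s.1.2).2, s.2.2.2.2⟩
            left_inv _ := rfl
            right_inv _ := rfl }
    _ = Nat.card ((Icc 1 ℓ).powersetCard h × LoopedWalks inW (2 * (ℓ - h)) ν ∅) :=
        Nat.card_congr <| (Equiv.sigmaCongrRight fun S => (fiber S).some).trans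
          (Equiv.sigmaEquivProd _ _)
    _ = ℓ.choose h * sigmaCount k (2 * (ℓ - h)) ν := by
        rw [Nat.card_prod, Nat.card_eq_finsetCard, card_powersetCard, Nat.card_Icc,
          Nat.add_sub_cancel, card_loopedWalks_empty]
end

section
/- Fix an integer k ≥ 3 and N ≥ 1. For 0 ≤ i ≤ 2N and μ ∈ W_{k−1}, let T(μ,i) denote the number of sequences (v_i = μ, v_{i+1}, …, v_{2N} = δ) of points of W_{k−1} with v_t − v_{t−1} ∈ {−e_h : 0 ≤ h ≤ k−1} for odd t and v_t − v_{t−1} ∈ {+e_h : 0 ≤ h ≤ k−1} for even t, for all i+1 ≤ t ≤ 2N. Then for every P_{W_{k−1}}-walk (λ^0 = δ, λ^1, …, λ^{2N} = δ) of length 2N: T(λ^i, i) > 0 for all 0 ≤ i ≤ 2N, and the product over i = 0,…,2N−1 of the rational numbers T(λ^{i+1}, i+1)/T(λ^i, i) equals 1/ω^δ_{k,2N}. In particular, the Markov process with these transition probabilities generates each P_{W_{k−1}}-walk of length 2N from δ to δ (and hence each k-noncrossing partition of [N]) with uniform probability 1/ω^δ_{k,2N}. -/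
open Finset

/-- `T(μ, i)`: the number of sequences `(v_i = μ, v_{i+1}, …, v_{2N} = δ)` of points
of `W_{k-1}` whose step at each absolute time `t` (for `i+1 ≤ t ≤ 2N`) is a
`-e_h`-step if `t` is odd and a `+e_h`-step if `t` is even. -/
noncomputable def tailCount (k N i : ℕ) (μ : Pt k) : ℕ :=
  Nat.card {v : Fin (2 * N - i + 1) → Pt k //
    v ⟨0, Nat.succ_pos _⟩ = μ ∧ v (Fin.last (2 * N - i)) = delta k ∧
    (∀ t, inW (v t)) ∧
    ∀ t : ℕ, ∀ h : t + 1 < 2 * N - i + 1,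
      (Odd (i + t + 1) → minusStep (v ⟨t + 1, h⟩ - v ⟨t, by omega⟩)) ∧
      (Even (i + t + 1) → plusStep (v ⟨t + 1, h⟩ - v ⟨t, by omega⟩))}

/- The ratios `T(λ^{i+1}, i+1) / T(λ^i, i)` telescope to `T(δ, 2N) / T(δ, 0)`.
Here `T(δ, 2N) = 1` (only the constant sequence), `T(δ, 0) = ω^δ_{k,2N}`, and every
intermediate `T(λ^i, i)` is positive because the tail `λ^i, …, λ^{2N}` of the given walk is
one of the sequences it counts. -/

theorem Fin.prod_univ_succ_div_castSucc {G : Type*} [CommGroupWithZero G] :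
    ∀ {n : ℕ} (f : Fin (n + 1) → G), (∀ i, f i ≠ 0) →
      ∏ i : Fin n, f i.succ / f i.castSucc = f (Fin.last n) / f 0
  | 0, f, hf => by simp [div_self (hf 0)]
  | n + 1, f, hf => by
    simp only [Fin.prod_univ_castSucc, Fin.succ_castSucc]
    rw [Fin.prod_univ_succ_div_castSucc (fun i => f i.castSucc) (fun i => hf _)]
    simp only [Fin.succ_last, Fin.castSucc_zero]
    field_simp [hf]

theorem Fin.eq_of_zero_eq_of_succ_sub_castSucc_eq {α : Type*} [AddGroup α] {m : ℕ}
    {v w : Fin (m + 1) → α} (h0 : v 0 = w 0)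
    (hstep : ∀ t : Fin m, v t.succ - v t.castSucc = w t.succ - w t.castSucc) : v = w := by
  funext t
  induction t using Fin.induction with
  | zero => exact h0
  | succ t ih => rw [← sub_add_cancel (v t.succ), hstep, ih, sub_add_cancel]

theorem Set.finite_walks_of_finite_steps {α : Type*} [AddGroup α] {S : Set α} (hS : S.Finite)
    (x : α) (m : ℕ) :
    {v : Fin (m + 1) → α | v 0 = x ∧ ∀ t : Fin m, v t.succ - v t.castSucc ∈ S}.Finite := by
  have : Finite S := hS.to_subtype
  refine Set.finite_coe_iff.mp (Finite.of_injective
    (fun v t => (⟨v.1 t.succ - v.1 t.castSucc, v.2.2 t⟩ : S)) ?_)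
  rintro ⟨v, hv0, _⟩ ⟨w, hw0, _⟩ hvw
  exact Subtype.ext (Fin.eq_of_zero_eq_of_succ_sub_castSucc_eq (hv0.trans hw0.symm)
    fun t => congrArg Subtype.val (congrFun hvw t))

theorem finite_setOf_plusStep_or_minusStep (k : ℕ) :
    {d : Pt k | plusStep d ∨ minusStep d}.Finite := by
  refine ((Set.finite_range (eVec k)).union (Set.finite_range fun i => -eVec k i)).subset ?_
  rintro d (⟨i, rfl⟩ | ⟨i, rfl⟩)
  exacts [Or.inl ⟨i, rfl⟩, Or.inr ⟨i, rfl⟩]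

theorem tailCount_pos_of_isPWalk {k N : ℕ} {lam : Fin (2 * N + 1) → Pt k}
    (hlam : IsPWalk (inW (k := k)) (2 * N) lam) (hend : lam (Fin.last (2 * N)) = delta k)
    (i : Fin (2 * N + 1)) : 0 < tailCount k N i (lam i) := by
  obtain ⟨-, hW, hstep⟩ := hlam
  have hi := i.isLt
  rw [tailCount, Nat.card_pos_iff]
  constructor
  · refine ⟨⟨fun t => lam ⟨i + t, by omega⟩, rfl, ?_, fun t => hW _, ?_⟩⟩
    · exact (congrArg lam (Fin.ext (by simp only [Fin.val_last]; omega))).trans hend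
    · exact fun t ht => hstep (i + t) (by omega)
  · refine ((Set.finite_walks_of_finite_steps (finite_setOf_plusStep_or_minusStep k) (lam i)
      (2 * N - i)).subset ?_).to_subtype
    rintro v ⟨hv0, -, -, hv⟩
    refine ⟨hv0, fun t => ?_⟩
    obtain ⟨hminus, hplus⟩ := hv t (by omega)
    rcases Nat.even_or_odd (i + t + 1) with he | ho
    exacts [Or.inl (hplus he), Or.inr (hminus ho)]

theorem tailCount_two_mul_delta (k N : ℕ) : tailCount k N (2 * N) (delta k) = 1 := by
  rw [tailCount, Nat.card_eq_one_iff_unique]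
  refine ⟨⟨fun ⟨v, hv0, _⟩ ⟨w, hw0, _⟩ => Subtype.ext ?_⟩,
    ⟨⟨fun _ => delta k, rfl, rfl, fun _ => inW_delta k, fun t ht => by omega⟩⟩⟩
  funext t
  obtain rfl : t = 0 := Fin.ext (by omega)
  exact hv0.trans hw0.symm

theorem tailCount_zero_delta (k N : ℕ) :
    tailCount k N 0 (delta k) = omegaCount k (2 * N) (delta k) := by
  refine Nat.card_congr (Equiv.subtypeEquivRight fun v => ?_)
  simp only [IsPWalk, Nat.zero_add]
  exact ⟨fun ⟨h0, hl, hW, hs⟩ => ⟨⟨h0, hW, hs⟩, hl⟩, fun ⟨⟨h0, hW, hs⟩, hl⟩ => ⟨h0, hl, hW, hs⟩⟩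

theorem uniform_generation_general (k N : ℕ)
    (lam : Fin (2 * N + 1) → Pt k)
    (hlam : IsPWalk (inW (k := k)) (2 * N) lam)
    (hend : lam (Fin.last (2 * N)) = delta k) :
    (∀ i : Fin (2 * N + 1), 0 < tailCount k N (i : ℕ) (lam i)) ∧
    ∏ i : Fin (2 * N),
        ((tailCount k N ((i : ℕ) + 1) (lam i.succ) : ℚ) /
          (tailCount k N (i : ℕ) (lam i.castSucc) : ℚ)) =
      1 / (omegaCount k (2 * N) (delta k) : ℚ) := by
  have hpos := tailCount_pos_of_isPWalk hlam hend
  refine ⟨hpos, ?_⟩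
  calc _ = (tailCount k N (2 * N) (lam (Fin.last _)) : ℚ) / tailCount k N 0 (lam 0) :=
        Fin.prod_univ_succ_div_castSucc (fun i => (tailCount k N i (lam i) : ℚ))
          fun i => Nat.cast_ne_zero.mpr (hpos i).ne'
    _ = 1 / (omegaCount k (2 * N) (delta k) : ℚ) := by
        rw [hend, show lam 0 = delta k from hlam.1, tailCount_two_mul_delta, tailCount_zero_delta,
          Nat.cast_one]

/-- along any `𝒫_{W_{k-1}}`-walk `(λ^0 = δ, …, λ^{2N} = δ)`, the tail
counts `T(λ^i, i)` are positive and the product of the transition probabilities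
`T(λ^{i+1}, i+1)/T(λ^i, i)` equals `1/ω^δ_{k,2N}`: the Markov process generates
each such walk (hence each `k`-noncrossing partition of `[N]`) uniformly. -/
theorem uniform_generation (k N : ℕ) (hk : 3 ≤ k) (hN : 1 ≤ N)
    (lam : Fin (2 * N + 1) → Pt k)
    (hlam : IsPWalk (inW (k := k)) (2 * N) lam)
    (hend : lam (Fin.last (2 * N)) = delta k) :
    (∀ i : Fin (2 * N + 1), 0 < tailCount k N (i : ℕ) (lam i)) ∧
    ∏ i : Fin (2 * N),
        ((tailCount k N ((i : ℕ) + 1) (lam i.succ) : ℚ) /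
          (tailCount k N (i : ℕ) (lam i.castSucc) : ℚ)) =
      1 / (omegaCount k (2 * N) (delta k) : ℚ) :=
  uniform_generation_general k N lam hlam hend
end
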